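/- arXiv:math/9402208 — 9 statements merged into one kernel-verified Lean document; each statement's English description precedes it below -/
import Mathlib

section
/- Let M be an Orlicz function (convex, non-decreasing, M(0)=0, M(t)>0 for some t) and suppose there exist ε>0 and 0<s<1 such that the series ∑_{i=1}^∞ M(ε s^i)/M(s^i) converges (with M(s^i)>0 for all i). Then lim_{t→0⁺} M(ε s t)/M(t) = 0. -/
open scoped Topology

/-- If `M` is a non-degenerate Orlicz function (convex, non-decreasing on `[0,∞)`,
`M 0 = 0`, `M t > 0` for `t > 0`) and there are `ε > 0` and `0 < s < 1` with
`∑ M(ε sⁱ)/M(sⁱ) < ∞`, then `M(εst)/M(t) → 0` as `t → 0⁺`. -/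
theorem stmt0 (M : ℝ → ℝ) (hconv : ConvexOn ℝ (Set.Ici 0) M)
    (hmono : MonotoneOn M (Set.Ici 0)) (h0 : M 0 = 0)
    (hpos : ∀ t > 0, M t > 0)
    (ε s : ℝ) (hε : 0 < ε) (hs0 : 0 < s) (hs1 : s < 1)
    (hsum : Summable (fun i : ℕ => M (ε * s ^ (i + 1)) / M (s ^ (i + 1)))) :
    Filter.Tendsto (fun t => M (ε * s * t) / M t) (𝓝[>] 0) (𝓝 0) := by
  have hMnn : ∀ x, 0 ≤ x → 0 ≤ M x := by
    intro x hx
    have := hmono (Set.mem_Ici.mpr le_rfl) (Set.mem_Ici.mpr hx) hx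
    linarith
  rw [Metric.tendsto_nhdsWithin_nhds]
  intro η hη
  obtain ⟨N, hN⟩ := (Metric.tendsto_atTop.mp hsum.tendsto_atTop_zero) η hη
  refine ⟨s ^ (N + 1), pow_pos hs0 _, ?_⟩
  intro t ht hdist
  have ht0 : 0 < t := ht
  rw [Real.dist_eq, sub_zero, abs_of_pos ht0] at hdist
  -- there exists j with s^(j+1) < t
  have htend : Filter.Tendsto (fun j : ℕ => s ^ j) Filter.atTop (𝓝 0) :=
    tendsto_pow_atTop_nhds_zero_of_lt_one hs0.le hs1
  have hex : ∃ j : ℕ, s ^ (j + 1) < t := by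
    obtain ⟨j, hj⟩ := (htend.eventually_lt_const ht0).exists
    exact ⟨j, lt_of_le_of_lt (pow_le_pow_of_le_one hs0.le hs1.le (Nat.le_succ j)) hj⟩
  classical
  set j := Nat.find hex with hjdef
  have hj1 : s ^ (j + 1) < t := Nat.find_spec hex
  have hmin : ∀ k < j, ¬ (s ^ (k + 1) < t) := fun k hk => Nat.find_min hex hk
  have hjN : N + 1 ≤ j := by
    by_contra hcon
    push_neg at hcon
    have : s ^ (N + 1) ≤ s ^ (j + 1) :=
      pow_le_pow_of_le_one hs0.le hs1.le (by omega)
    linarith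
  have hjpos : 1 ≤ j := le_trans (Nat.le_add_left 1 N) hjN
  have htle : t ≤ s ^ j := by
    have := hmin (j - 1) (by omega)
    push_neg at this
    have heq : j - 1 + 1 = j := by omega
    rwa [heq] at this
  -- bounds
  have hden_pos : 0 < M (s ^ (j + 1)) := hpos _ (pow_pos hs0 _)
  have hden_le : M (s ^ (j + 1)) ≤ M t :=
    hmono (Set.mem_Ici.mpr (pow_pos hs0 _).le) (Set.mem_Ici.mpr ht0.le) hj1.le
  have hnum_le : M (ε * s * t) ≤ M (ε * s ^ (j + 1)) := by
    have harg : ε * s * t ≤ ε * s ^ (j + 1) := by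
      have : s * t ≤ s * s ^ j := by nlinarith
      calc ε * s * t = ε * (s * t) := by ring
        _ ≤ ε * (s * s ^ j) := by nlinarith
        _ = ε * s ^ (j + 1) := by ring
    exact hmono (Set.mem_Ici.mpr (by positivity)) (Set.mem_Ici.mpr (by positivity)) harg
  have hratio_nn : 0 ≤ M (ε * s * t) / M t :=
    div_nonneg (hMnn _ (by positivity)) (hMnn _ ht0.le)
  have hratio_le : M (ε * s * t) / M t ≤ M (ε * s ^ (j + 1)) / M (s ^ (j + 1)) :=
    div_le_div₀ (hMnn _ (by positivity)) hnum_le hden_pos hden_le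
  have haj : M (ε * s ^ (j + 1)) / M (s ^ (j + 1)) < η := by
    have := hN j (by omega)
    rw [Real.dist_eq, sub_zero, abs_of_nonneg
      (div_nonneg (hMnn _ (by positivity)) hden_pos.le)] at this
    exact this
  rw [Real.dist_eq, sub_zero, abs_of_nonneg hratio_nn]
  linarith
end

section
/- Let t_1 > t_2 > ⋯ > 0 with t_n → 0. For n ∈ ℕ let K_n ⊆ ℝ^ℕ be the set of sequences (b_i) such that (|b_i|) = t_n·∑_{i∈A} e_i for some finite set A ⊆ ℕ with |A| ≤ n (the empty sum being the zero sequence). Then in the product (pointwise convergence) topology on [−t_1, t_1]^ℕ, the closure of K = ⋃_{n≥1} K_n equals ⋃_{n≥1} K_n itself together with {0}; in particular, since 0 ∈ K_1, the set K is closed, hence compact. -/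
/-- The `n`-th piece of the union. -/
def Sset (t : ℕ → ℝ) (n : ℕ) : Set (ℕ → ℝ) :=
  {b : ℕ → ℝ | ∃ A : Finset ℕ, A.card ≤ n + 1 ∧ ∀ i, |b i| = if i ∈ A then t n else 0}

lemma Sset_closed (t : ℕ → ℝ) (htpos : ∀ n, 0 < t n) (n : ℕ) : IsClosed (Sset t n) := by
  have heq : Sset t n =
      (⋂ i : ℕ, {b : ℕ → ℝ | b i = t n ∨ b i = -(t n) ∨ b i = 0}) ∩
      ⋂ (B : Finset ℕ) (_ : B.card = n + 2), ⋃ i ∈ B, {b : ℕ → ℝ | b i = 0} := by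
    ext b
    constructor
    · rintro ⟨A, hA, hb⟩
      constructor
      · refine Set.mem_iInter.2 fun i => ?_
        by_cases hi : i ∈ A
        · have h := hb i; rw [if_pos hi] at h
          rcases (abs_eq (le_of_lt (htpos n))).1 h with h' | h'
          · exact Or.inl h'
          · exact Or.inr (Or.inl h')
        · have h := hb i; rw [if_neg hi] at h
          exact Or.inr (Or.inr (abs_eq_zero.1 h))
      · refine Set.mem_iInter.2 fun B => Set.mem_iInter.2 fun hB => ?_
        have hns : ¬ B ⊆ A := fun hsub => by
          have := Finset.card_le_card hsub; omega
        obtain ⟨i, hiB, hiA⟩ := Finset.not_subset.1 hns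
        refine Set.mem_biUnion hiB ?_
        have h := hb i; rw [if_neg hiA] at h
        exact abs_eq_zero.1 h
    · rintro ⟨h1, h2⟩
      have key : ∀ B : Finset ℕ, ↑B ⊆ {i | b i ≠ 0} → B.card ≤ n + 1 := by
        intro B hB
        by_contra hc
        push_neg at hc
        obtain ⟨C, hCB, hCcard⟩ := Finset.exists_subset_card_eq (s := B) (n := n + 2) (by omega)
        have := Set.mem_iInter.1 (Set.mem_iInter.1 h2 C) hCcard
        obtain ⟨i, hiC, hi0⟩ := Set.mem_iUnion₂.1 this
        exact hB (hCB hiC) hi0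
      have hfin : {i | b i ≠ 0}.Finite := by
        by_contra hinf
        obtain ⟨B, hBsub, hBcard⟩ := Set.Infinite.exists_subset_card_eq hinf (n + 2)
        have := key B hBsub; omega
      refine ⟨hfin.toFinset, ?_, ?_⟩
      · exact key hfin.toFinset (by simp)
      · intro i
        by_cases hi : b i = 0
        · rw [if_neg (by simp [hi]), hi, abs_zero]
        · rw [if_pos (by simp [hi])]
          rcases Set.mem_iInter.1 h1 i with h | h | h
          · rw [h, abs_of_pos (htpos n)]
          · rw [h, abs_neg, abs_of_pos (htpos n)]
          · exact absurd h hi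
  rw [heq]
  refine IsClosed.inter (isClosed_iInter fun i => ?_) (isClosed_iInter fun B =>
    isClosed_iInter fun _ => Set.Finite.isClosed_biUnion B.finite_toSet fun i _ =>
      isClosed_eq (continuous_apply i) continuous_const)
  have : {b : ℕ → ℝ | b i = t n ∨ b i = -(t n) ∨ b i = 0} =
      (fun b : ℕ → ℝ => b i) ⁻¹' ({t n, -(t n), 0} : Set ℝ) := rfl
  rw [this]
  exact (Set.toFinite _).isClosed.preimage (continuous_apply i)

/-- With `t₁ > t₂ > ⋯ > 0`, `tₙ → 0`, and `Kₙ` the set of sequences whose absolute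
values form `tₙ·∑_{i∈A} eᵢ` with `|A| ≤ n`, the closure of `K = ⋃ₙ Kₙ` in the
product topology equals `K ∪ {0}`; since `0 ∈ K`, `K` is closed and compact.
(Here `K n` with `n : ℕ` encodes `K_{n+1}`, via `t n = t_{n+1}`.) -/
theorem stmt7 (t : ℕ → ℝ) (htpos : ∀ n, 0 < t n)
    (htanti : StrictAnti t) (ht0 : Filter.Tendsto t Filter.atTop (nhds 0)) :
    closure (⋃ n : ℕ, {b : ℕ → ℝ | ∃ A : Finset ℕ, A.card ≤ n + 1 ∧
        ∀ i, |b i| = if i ∈ A then t n else 0}) =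
      (⋃ n : ℕ, {b : ℕ → ℝ | ∃ A : Finset ℕ, A.card ≤ n + 1 ∧
        ∀ i, |b i| = if i ∈ A then t n else 0}) ∪ {0} ∧
    IsClosed (⋃ n : ℕ, {b : ℕ → ℝ | ∃ A : Finset ℕ, A.card ≤ n + 1 ∧
        ∀ i, |b i| = if i ∈ A then t n else 0}) ∧
    IsCompact (⋃ n : ℕ, {b : ℕ → ℝ | ∃ A : Finset ℕ, A.card ≤ n + 1 ∧
        ∀ i, |b i| = if i ∈ A then t n else 0}) := by
  have hKeq : (⋃ n : ℕ, {b : ℕ → ℝ | ∃ A : Finset ℕ, A.card ≤ n + 1 ∧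
      ∀ i, |b i| = if i ∈ A then t n else 0}) = ⋃ n : ℕ, Sset t n := rfl
  rw [hKeq]
  have h0 : (0 : ℕ → ℝ) ∈ ⋃ n : ℕ, Sset t n :=
    Set.mem_iUnion.2 ⟨0, ⟨∅, by simp, fun i => by simp⟩⟩
  have hsub : closure (⋃ n : ℕ, Sset t n) ⊆ ⋃ n : ℕ, Sset t n := by
    intro b hb
    by_cases hb0 : b = 0
    · subst hb0; exact h0
    · obtain ⟨i, hi⟩ := Function.ne_iff.1 hb0
      have habs : (0 : ℝ) < |b i| := abs_pos.2 hi
      obtain ⟨n, hn⟩ := (ht0.eventually_lt_const habs).exists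
      have hUopen : IsOpen {c : ℕ → ℝ | t n < |c i|} :=
        isOpen_lt continuous_const ((continuous_abs).comp (continuous_apply i))
      have hbU : b ∈ {c : ℕ → ℝ | t n < |c i|} := hn
      have key : (⋃ m : ℕ, Sset t m) ∩ {c : ℕ → ℝ | t n < |c i|} ⊆
          ⋃ j ∈ Finset.range n, Sset t j := by
        rintro c ⟨hc, hci⟩
        simp only [Set.mem_setOf_eq] at hci
        obtain ⟨m, A, hA, hcA⟩ := Set.mem_iUnion.1 hc
        have h := hcA i
        by_cases him : i ∈ A
        · rw [if_pos him] at h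
          have hmn : m < n := by
            by_contra hmn
            push_neg at hmn
            have : t m ≤ t n := htanti.antitone hmn
            rw [h] at hci; linarith
          exact Set.mem_biUnion (Finset.mem_range.2 hmn) ⟨A, hA, hcA⟩
        · rw [if_neg him] at h
          rw [h] at hci
          exact absurd hci (not_lt.2 (le_of_lt (htpos n)))
      have hbcl : b ∈ closure ((⋃ m : ℕ, Sset t m) ∩ {c : ℕ → ℝ | t n < |c i|}) := by
        rw [mem_closure_iff] at hb ⊢
        intro o ho hbo
        obtain ⟨c, ⟨hco, hcU⟩, hcK⟩ := hb (o ∩ {c : ℕ → ℝ | t n < |c i|})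
          (ho.inter hUopen) ⟨hbo, hbU⟩
        exact ⟨c, hco, hcK, hcU⟩
      have hfin : IsClosed (⋃ j ∈ Finset.range n, Sset t j) :=
        Set.Finite.isClosed_biUnion (Finset.range n).finite_toSet
          fun j _ => Sset_closed t htpos j
      have := hfin.closure_subset (closure_mono key hbcl)
      obtain ⟨j, _, hj⟩ := Set.mem_iUnion₂.1 this
      exact Set.mem_iUnion.2 ⟨j, hj⟩
  have hclosed : IsClosed (⋃ n : ℕ, Sset t n) := isClosed_of_closure_subset hsub
  have hcomp : IsCompact (⋃ n : ℕ, Sset t n) := by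
    refine IsCompact.of_isClosed_subset (isCompact_univ_pi fun _ : ℕ =>
      isCompact_Icc (a := -(t 0)) (b := t 0)) hclosed ?_
    rintro c hc
    obtain ⟨m, A, hA, hcA⟩ := Set.mem_iUnion.1 hc
    intro i _
    have h := hcA i
    have habs : |c i| ≤ t 0 := by
      by_cases him : i ∈ A
      · rw [if_pos him] at h; rw [h]; exact htanti.antitone (Nat.zero_le m)
      · rw [if_neg him] at h; rw [h]; exact le_of_lt (htpos 0)
    exact abs_le.1 habs
  refine ⟨?_, hclosed, hcomp⟩
  rw [hclosed.closure_eq, Set.union_eq_self_of_subset_right (Set.singleton_subset_iff.2 h0)]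
end

section
/- With K_n as above (sequences (b_i) with (|b_i|) = t_n ∑_{i∈A} e_i, |A| ≤ n), the derived set (set of limit points in the product topology) of K_n is exactly {(b_i) : (|b_i|) = t_n·∑_{i∈A} e_i for some A ⊆ ℕ with |A| ≤ n−1}. -/
/-- The derived set (set of accumulation points in the product topology) of
`Kₙ = {b : (|bᵢ|) = tₙ·∑_{i∈A} eᵢ, |A| ≤ n}` is exactly the analogous set with
`|A| ≤ n - 1`.  Here `n ≥ 1` and `tn = tₙ > 0`. -/
theorem stmt8 (tn : ℝ) (htn : 0 < tn) (n : ℕ) (hn : 1 ≤ n) :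
    derivedSet {b : ℕ → ℝ | ∃ A : Finset ℕ, A.card ≤ n ∧
        ∀ i, |b i| = if i ∈ A then tn else 0} =
      {b : ℕ → ℝ | ∃ A : Finset ℕ, A.card ≤ n - 1 ∧
        ∀ i, |b i| = if i ∈ A then tn else 0} := by
  set K : Set (ℕ → ℝ) := {b : ℕ → ℝ | ∃ A : Finset ℕ, A.card ≤ n ∧
      ∀ i, |b i| = if i ∈ A then tn else 0} with hK
  -- the standard neighborhood used repeatedly
  have hUopen : ∀ (b : ℕ → ℝ) (F : Finset ℕ),
      IsOpen {c : ℕ → ℝ | ∀ j ∈ F, |c j - b j| < tn} := by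
    intro b F
    have hrw : {c : ℕ → ℝ | ∀ j ∈ F, |c j - b j| < tn}
        = ⋂ j ∈ F, {c : ℕ → ℝ | |c j - b j| < tn} := by
      ext c; simp
    rw [hrw]
    exact isOpen_biInter_finset fun j _ =>
      isOpen_lt (((continuous_apply j).sub continuous_const).abs) continuous_const
  have hUmem : ∀ (b : ℕ → ℝ) (F : Finset ℕ),
      {c : ℕ → ℝ | ∀ j ∈ F, |c j - b j| < tn} ∈ nhds b := by
    intro b F
    exact (hUopen b F).mem_nhds (by simp [htn])
  ext b
  constructor
  · intro hb
    have hcl : b ∈ closure K := derivedSet_subset_closure _ hb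
    -- Step 1: each |b i| is 0 or tn
    have h1 : ∀ i, b i ≠ 0 → |b i| = tn := by
      intro i hi
      have hsub : closure K ⊆ (fun c : ℕ → ℝ => |c i|) ⁻¹' ({0, tn} : Set ℝ) := by
        apply closure_minimal
        · rintro c ⟨A, -, hA⟩
          have := hA i
          by_cases h : i ∈ A <;> simp [h] at this <;> simp [this]
        · exact ((Set.finite_singleton tn).insert 0).isClosed.preimage
            ((continuous_apply i).abs)
      have := hsub hcl
      simp only [Set.mem_preimage, Set.mem_insert_iff, Set.mem_singleton_iff] at this
      rcases this with h | h
      · exact absurd (abs_eq_zero.mp h) hi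
      · exact h
    -- Step 2: every finite subset of the support has card ≤ n
    have h2 : ∀ F : Finset ℕ, (↑F ⊆ {i | b i ≠ 0}) → F.card ≤ n := by
      intro F hF
      obtain ⟨c, hcU, hcK⟩ := mem_closure_iff_nhds.mp hcl _ (hUmem b F)
      obtain ⟨B, hBcard, hB⟩ := hcK
      have hFB : F ⊆ B := by
        intro j hj
        by_contra hjB
        have hcj : |c j| = 0 := by simpa [hjB] using hB j
        have hbj : |b j| = tn := h1 j (hF hj)
        have := hcU j hj
        rw [abs_eq_zero.mp hcj] at this
        rw [abs_sub_comm] at this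
        simp only [sub_zero] at this
        linarith [this, hbj.ge, hbj.le]
      exact le_trans (Finset.card_le_card hFB) hBcard
    -- the support is finite
    have hfin : {i | b i ≠ 0}.Finite := by
      by_contra hinf
      obtain ⟨F, hFsub, hFcard⟩ :=
        Set.Infinite.exists_subset_card_eq hinf (n + 1)
      have := h2 F hFsub
      omega
    set A0 : Finset ℕ := hfin.toFinset with hA0
    have hA0sub : ↑A0 ⊆ {i | b i ≠ 0} := by simp [hA0]
    have hA0card : A0.card ≤ n := h2 A0 hA0sub
    have hmemA0 : ∀ i, i ∈ A0 ↔ b i ≠ 0 := by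
      intro i; simp [hA0, Set.Finite.mem_toFinset]
    -- Step 3: A0.card ≠ n
    have h3 : A0.card ≠ n := by
      intro hcard
      rw [mem_derivedSet, accPt_iff_nhds] at hb
      obtain ⟨y, ⟨hyU, hyK⟩, hyb⟩ := hb _ (hUmem b A0)
      obtain ⟨B, hBcard, hB⟩ := hyK
      -- on A0, y agrees with b
      have hagree : ∀ j ∈ A0, y j = b j := by
        intro j hj
        have hbj : |b j| = tn := h1 j ((hmemA0 j).mp hj)
        have hjB : j ∈ B := by
          by_contra hjB
          have hyj : y j = 0 := abs_eq_zero.mp (by simpa [hjB] using hB j)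
          have := hyU j hj
          rw [hyj, abs_sub_comm, sub_zero] at this
          linarith [hbj.ge, hbj.le]
        have hyj : |y j| = tn := by simpa [hjB] using hB j
        have hlt := hyU j hj
        rw [abs_lt] at hlt
        rcases (abs_eq htn.le).mp hyj with h | h <;>
          rcases (abs_eq htn.le).mp hbj with h' | h' <;>
            rw [h, h'] at hlt ⊢ <;> first | rfl | linarith
      have hA0B : A0 ⊆ B := by
        intro j hj
        by_contra hjB
        have hyj : y j = 0 := abs_eq_zero.mp (by simpa [hjB] using hB j)
        have := hagree j hj
        rw [hyj] at this
        exact (hmemA0 j).mp hj this.symm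
      have hBA0 : B = A0 :=
        (Finset.eq_of_subset_of_card_le hA0B (by omega)).symm
      apply hyb
      funext i
      by_cases hi : i ∈ A0
      · exact hagree i hi
      · have hyi : y i = 0 := abs_eq_zero.mp (by simp [hB i, hBA0, hi])
        have hbi : b i = 0 := by
          by_contra h
          exact hi ((hmemA0 i).mpr h)
        rw [hyi, hbi]
    refine ⟨A0, by omega, fun i => ?_⟩
    by_cases hi : i ∈ A0
    · simp only [hi, if_true]
      exact h1 i ((hmemA0 i).mp hi)
    · simp only [hi, if_false]
      rw [abs_eq_zero]
      by_contra h
      exact hi ((hmemA0 i).mpr h)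
  · rintro ⟨A, hAcard, hA⟩
    rw [mem_derivedSet, accPt_iff_nhds]
    intro U hU
    -- the approximating sequence
    set c : ℕ → (ℕ → ℝ) := fun m => Function.update b m tn with hc
    have hten : Filter.Tendsto c Filter.atTop (nhds b) := by
      rw [tendsto_pi_nhds]
      intro i
      apply Filter.Tendsto.congr' _ (tendsto_const_nhds (x := b i))
      filter_upwards [Filter.eventually_gt_atTop i] with m hm
      simp [hc, Function.update_of_ne (Ne.symm (by omega : m ≠ i))]
    have hev : ∀ᶠ m in Filter.atTop, c m ∈ U ∧ A.sup id < m :=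
      (hten.eventually_mem hU).and (Filter.eventually_gt_atTop _)
    obtain ⟨m, hmU, hmA⟩ := hev.exists
    have hmnA : m ∉ A := by
      intro h
      have := Finset.le_sup (f := id) h
      simp only [id] at this
      omega
    have hbm : b m = 0 := abs_eq_zero.mp (by simpa [hmnA] using hA m)
    refine ⟨c m, ⟨hmU, ⟨insert m A, ?_, ?_⟩⟩, ?_⟩
    · have := Finset.card_insert_le m A
      omega
    · intro i
      by_cases hi : i = m
      · subst hi
        simp [hc, Function.update_self, abs_of_pos htn]
      · simp [hc, Function.update_of_ne hi, Finset.mem_insert, hA i, hi]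
    · intro h
      have := congrFun h m
      simp [hc, Function.update_self, hbm] at this
      exact absurd this (ne_of_gt htn)
end

section
/- A Banach space E embeds isomorphically into c₀ if and only if there exist a sequence (x'_i) in the dual E' converging to 0 in the weak* topology and a constant C > 0 such that ‖x‖ ≤ C·sup_i |⟨x, x'_i⟩| for all x ∈ E. -/
open scoped ZeroAtInfty
open Filter

private lemma c0_norm_eq (f : C₀(ℕ, ℝ)) : ‖f‖ = ⨆ i, |f i| := by
  rw [← ZeroAtInftyContinuousMap.norm_toBCF_eq_norm,
    BoundedContinuousFunction.norm_eq_iSup_norm]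
  simp [Real.norm_eq_abs]

private lemma c0_abs_apply_le (f : C₀(ℕ, ℝ)) (i : ℕ) : |f i| ≤ ‖f‖ := by
  rw [← ZeroAtInftyContinuousMap.norm_toBCF_eq_norm]
  simpa [Real.norm_eq_abs] using f.toBCF.norm_coe_le_norm i

/-- A Banach space `E` embeds isomorphically into `c₀` iff there are a weak*-null
sequence `(x'ᵢ)` in `E'` and a constant `C > 0` with `‖x‖ ≤ C·supᵢ |⟨x, x'ᵢ⟩|`
for all `x`. -/
theorem stmt10 (E : Type*) [NormedAddCommGroup E] [NormedSpace ℝ E] [CompleteSpace E] :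
    (∃ T : E →L[ℝ] C₀(ℕ, ℝ), ∃ a > (0 : ℝ), ∃ b > (0 : ℝ),
        ∀ x : E, a * ‖x‖ ≤ ‖T x‖ ∧ ‖T x‖ ≤ b * ‖x‖) ↔
      (∃ x' : ℕ → (E →L[ℝ] ℝ), ∃ C > (0 : ℝ),
        (∀ x : E, Filter.Tendsto (fun i => x' i x) Filter.atTop (nhds 0)) ∧
        ∀ x : E, ‖x‖ ≤ C * ⨆ i, |x' i x|) := by
  constructor
  · rintro ⟨T, a, ha, b, hb, hT⟩
    refine ⟨fun i => LinearMap.mkContinuous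
      { toFun := fun x => T x i
        map_add' := fun x y => by simp
        map_smul' := fun c x => by simp }
      ‖T‖ (fun x => ?_), 1/a, by positivity, fun x => ?_, fun x => ?_⟩
    · calc ‖T x i‖ = |T x i| := Real.norm_eq_abs _
        _ ≤ ‖T x‖ := c0_abs_apply_le _ i
        _ ≤ ‖T‖ * ‖x‖ := T.le_opNorm x
    · have := (T x).zero_at_infty'
      rw [cocompact_eq_atTop] at this
      simpa using this
    · have h1 : a * ‖x‖ ≤ ‖T x‖ := (hT x).1
      have h2 : ‖T x‖ = ⨆ i, |T x i| := c0_norm_eq _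
      have : ‖x‖ ≤ (1/a) * ‖T x‖ := by
        rw [one_div, ← div_eq_inv_mul, le_div_iff₀ ha, mul_comm]
        exact h1
      simpa [h2] using this
  · rintro ⟨x', C, hC, htend, hbound⟩
    obtain ⟨M, hM⟩ : ∃ M, ∀ i, ‖x' i‖ ≤ M := by
      apply banach_steinhaus
      intro x
      obtain ⟨m, hm⟩ := ((htend x).norm.bddAbove_range)
      exact ⟨m, fun i => hm (Set.mem_range_self i)⟩
    have hM0 : 0 ≤ M := le_trans (norm_nonneg _) (hM 0)
    set F : E →ₗ[ℝ] C₀(ℕ, ℝ) :=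
      { toFun := fun x =>
          { toFun := fun i => x' i x
            continuous_toFun := continuous_of_discreteTopology
            zero_at_infty' := by rw [cocompact_eq_atTop]; exact htend x }
        map_add' := fun x y => by ext i; simp
        map_smul' := fun c x => by ext i; simp } with hF
    have hFnorm : ∀ x : E, ‖F x‖ ≤ (M + 1) * ‖x‖ := by
      intro x
      rw [c0_norm_eq]
      refine ciSup_le fun i => ?_
      calc |x' i x| = ‖x' i x‖ := (Real.norm_eq_abs _).symm
        _ ≤ ‖x' i‖ * ‖x‖ := (x' i).le_opNorm x
        _ ≤ (M + 1) * ‖x‖ :=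
          mul_le_mul_of_nonneg_right (by linarith [hM i]) (norm_nonneg x)
    refine ⟨F.mkContinuous (M + 1) hFnorm, 1/C, by positivity, M + 1, by linarith,
      fun x => ⟨?_, hFnorm x⟩⟩
    have h2 : ‖F x‖ = ⨆ i, |x' i x| := by rw [c0_norm_eq]; rfl
    have : ‖x‖ ≤ C * ‖F x‖ := by rw [h2]; exact hbound x
    rw [one_div, ← div_eq_inv_mul, div_le_iff₀ hC, mul_comm]
    exact this
end

section
/- Let E be a Banach space with a Schauder basis (e_i), and suppose there is a strictly increasing sequence (i_k) of natural numbers (with i_0 = 0) such that the series ∑_{i=1}^∞ a_i e_i converges in E whenever the block norms ‖∑_{i=i_{k−1}+1}^{i_k} a_i e_i‖ tend to 0 as k → ∞. Then E is isomorphic to the c₀-direct sum (∑ ⊕ E_k)_{c₀}, where E_k = span{e_i : i_{k−1} < i ≤ i_k}, and in particular E embeds into c₀. -/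
open scoped ZeroAtInfty ENNReal

/-- `E_k = span{e_i : i_{k-1} < i ≤ i_k}`. -/
def blockSpace (E : Type*) [NormedAddCommGroup E] [NormedSpace ℝ E]
    (e : ℕ → E) (idx : ℕ → ℕ) (k : ℕ) : Submodule ℝ E :=
  Submodule.span ℝ (e '' Set.Ioc (idx k) (idx (k + 1)))

open Filter Finset Topology
set_option synthInstance.maxHeartbeats 1000000
set_option maxHeartbeats 1000000

namespace Stmt11Aux

variable {E : Type*} [NormedAddCommGroup E] [NormedSpace ℝ E]
  {e : ℕ → E} {idx : ℕ → ℕ}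

theorem bs_fd (e : ℕ → E) (idx : ℕ → ℕ) (k : ℕ) :
    FiniteDimensional ℝ (blockSpace E e idx k) :=
  FiniteDimensional.span_of_finite ℝ ((Set.finite_Ioc _ _).image e)

theorem sum_Ioc_add_sum_Ioc {α : Type*} [AddCommMonoid α] (g : ℕ → α) {a b c : ℕ}
    (hab : a ≤ b) (hbc : b ≤ c) :
    (∑ i ∈ Ioc a b, g i) + ∑ i ∈ Ioc b c, g i = ∑ i ∈ Ioc a c, g i := by
  rw [← Finset.sum_union]
  · rw [Finset.Ioc_union_Ioc_eq_Ioc hab hbc]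
  · rw [Finset.disjoint_left]; intro i hi hi2; simp at hi hi2; omega

theorem sum_blocks {α : Type*} [AddCommMonoid α] (hidx : StrictMono idx) (g : ℕ → α) (m : ℕ) :
    ∑ k ∈ range m, (∑ i ∈ Ioc (idx k) (idx (k+1)), g i) = ∑ i ∈ Ioc (idx 0) (idx m) , g i := by
  induction m with
  | zero => simp
  | succ m ih =>
    rw [Finset.sum_range_succ, ih, sum_Ioc_add_sum_Ioc g (hidx.monotone (Nat.zero_le m))
      (hidx.monotone (Nat.le_succ m))]

theorem sum_range_succ_eq {α : Type*} [AddCommMonoid α] (g : ℕ → α) (n : ℕ) :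
    ∑ i ∈ range (n+1), g i = g 0 + ∑ i ∈ Ioc 0 n, g i := by
  induction n with
  | zero => simp
  | succ n ih =>
    have h : Ioc 0 (n+1) = insert (n+1) (Ioc 0 n) := by ext i; simp; omega
    rw [Finset.sum_range_succ, ih, h, Finset.sum_insert (by simp), add_comm (g (n+1)), add_assoc]

/-- partial sums at block boundaries -/
theorem partial_sum_idx (hidx0 : idx 0 = 0) (hidx : StrictMono idx) (a : ℕ → ℝ) (m : ℕ) :
    ∑ i ∈ range (idx m + 1), a i • e i
      = a 0 • e 0 + ∑ k ∈ range m, (∑ i ∈ Ioc (idx k) (idx (k+1)), a i • e i) := by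
  rw [sum_range_succ_eq, sum_blocks hidx, hidx0]

end Stmt11Aux

section Chunk2
open Filter Finset Topology
variable {E : Type*} [NormedAddCommGroup E] [NormedSpace ℝ E]
  {e : ℕ → E} {idx : ℕ → ℕ}

namespace Stmt11Aux

theorem e_ne_zero
    (hbasis : ∀ x : E, ∃! a : ℕ → ℝ,
      Tendsto (fun n => ∑ i ∈ Finset.range n, a i • e i) atTop (nhds x))
    (j : ℕ) : e j ≠ 0 := by
  intro h
  obtain ⟨a, -, hu⟩ := hbasis 0
  have h0 : (fun _ : ℕ => (0:ℝ)) = a := hu _ (by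
    simpa using (tendsto_const_nhds : Tendsto (fun _ : ℕ => (0:E)) atTop (nhds 0)))
  have h1 : (fun i : ℕ => if i = j then (1:ℝ) else 0) = a := by
    refine hu _ ?_
    have : ∀ n, ∑ i ∈ Finset.range n, (if i = j then (1:ℝ) else 0) • e i = 0 := by
      intro n
      have : ∀ i ∈ Finset.range n, (if i = j then (1:ℝ) else 0) • e i = 0 := by
        intro i _
        by_cases hij : i = j <;> simp [hij, h]
      rw [Finset.sum_congr rfl this]; simp
    have hz : (fun n => ∑ i ∈ Finset.range n, (if i = j then (1:ℝ) else 0) • e i)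
        = fun _ : ℕ => (0:E) := funext this
    show Tendsto (fun n => ∑ i ∈ Finset.range n, (if i = j then (1:ℝ) else 0) • e i)
      atTop (nhds 0)
    rw [hz]
    exact tendsto_const_nhds
  have := congrFun (h1.trans h0.symm) j
  simp at this

theorem exists_blockIdx (hidx : StrictMono idx) (i : ℕ) : ∃ k, i ≤ idx (k + 1) :=
  ⟨i, le_trans (Nat.le_succ i) (hidx.le_apply)⟩

/-- the block containing `i` (for `i ≥ 1`) -/
noncomputable def blockIdx (hidx : StrictMono idx) (i : ℕ) : ℕ :=
  Nat.find (exists_blockIdx hidx i)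

theorem blockIdx_eq (hidx : StrictMono idx) {i k : ℕ} (h2 : i ≤ idx (k + 1)) :
    blockIdx hidx i ≤ k := Nat.find_le h2

theorem blockIdx_spec (hidx : StrictMono idx) {i k : ℕ} (h1 : idx k < i)
    (h2 : i ≤ idx (k + 1)) : blockIdx hidx i = k := by
  have hle : blockIdx hidx i ≤ k := Nat.find_le h2
  have hspec : i ≤ idx (blockIdx hidx i + 1) := Nat.find_spec (exists_blockIdx hidx i)
  rcases lt_or_eq_of_le hle with hlt | heq
  · exfalso
    have h3 : idx (blockIdx hidx i + 1) ≤ idx k := hidx.monotone (by omega)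
    omega
  · exact heq

/-- glue block coefficients into a single sequence vanishing at 0 -/
theorem exists_coeffs (hidx0 : idx 0 = 0) (hidx : StrictMono idx)
    (x : ∀ k, blockSpace E e idx k) :
    ∃ a : ℕ → ℝ, a 0 = 0 ∧
      ∀ k, ∑ i ∈ Finset.Ioc (idx k) (idx (k+1)), a i • e i = (x k : E) := by
  have hmem : ∀ k, ∃ l ∈ Finsupp.supported ℝ ℝ (Set.Ioc (idx k) (idx (k+1))),
      Finsupp.linearCombination ℝ e l = (x k : E) :=
    fun k => (Finsupp.mem_span_image_iff_linearCombination ℝ).mp (x k).2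
  choose l hl hsum using hmem
  refine ⟨fun i => l (blockIdx hidx i) i, ?_, ?_⟩
  · have h0 : blockIdx hidx 0 = 0 := Nat.eq_zero_of_le_zero (Nat.find_le (Nat.zero_le _))
    show l (blockIdx hidx 0) 0 = 0
    rw [h0]
    have := hl 0
    rw [Finsupp.mem_supported] at this
    by_contra hne
    have : (0:ℕ) ∈ Set.Ioc (idx 0) (idx 1) := this (Finsupp.mem_support_iff.mpr hne)
    simp [hidx0] at this
  · intro k
    have hcongr : ∀ i ∈ Finset.Ioc (idx k) (idx (k+1)),
        l (blockIdx hidx i) i • e i = l k i • e i := by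
      intro i hi
      rw [Finset.mem_Ioc] at hi
      rw [blockIdx_spec hidx hi.1 hi.2]
    rw [Finset.sum_congr rfl hcongr, ← hsum k, Finsupp.linearCombination_apply]
    rw [Finsupp.sum_of_support_subset (l k) ?_ _ (fun i _ => zero_smul ℝ (e i))]
    intro i hi
    have := (Finsupp.mem_supported ℝ (l k)).mp (hl k) hi
    simpa [Finset.mem_Ioc] using this

/-- Core convergence lemma: block sums converge, and the "uniqueness with an extra `e 0`
term" statement. -/
theorem core
    (hbasis : ∀ x : E, ∃! a : ℕ → ℝ,
      Tendsto (fun n => ∑ i ∈ Finset.range n, a i • e i) atTop (nhds x))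
    (hidx0 : idx 0 = 0) (hidx : StrictMono idx)
    (hblock : ∀ a : ℕ → ℝ,
      Tendsto (fun k => ‖∑ i ∈ Finset.Ioc (idx k) (idx (k + 1)), a i • e i‖) atTop (nhds 0) →
      ∃ x : E, Tendsto (fun n => ∑ i ∈ Finset.range n, a i • e i) atTop (nhds x))
    (f : ∀ k, blockSpace E e idx k)
    (hf : Tendsto (fun k => ‖(f k : E)‖) atTop (nhds 0)) (t : ℝ) :
    ∃ x : E, Tendsto (fun m => ∑ k ∈ Finset.range m, ((f k : E))) atTop (nhds x) ∧
      (x + t • e 0 = 0 → (∀ k, (f k : E) = 0) ∧ t = 0) := by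
  obtain ⟨a, ha0, hab⟩ := exists_coeffs hidx0 hidx f
  -- modified sequence with coefficient t at 0
  set a' : ℕ → ℝ := Function.update a 0 t with ha'
  have hblocks' : ∀ k, ∑ i ∈ Finset.Ioc (idx k) (idx (k+1)), a' i • e i = (f k : E) := by
    intro k
    rw [← hab k]
    refine Finset.sum_congr rfl fun i hi => ?_
    rw [Finset.mem_Ioc] at hi
    have : i ≠ 0 := by omega
    rw [ha', Function.update_of_ne this]
  have hconv : ∃ x : E, Tendsto (fun n => ∑ i ∈ Finset.range n, a' i • e i) atTop (nhds x) := by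
    refine hblock a' ?_
    simp only [hblocks']
    exact hf
  obtain ⟨y, hy⟩ := hconv
  have hsub : Tendsto (fun m => ∑ i ∈ Finset.range (idx m + 1), a' i • e i) atTop (nhds y) :=
    hy.comp ((tendsto_add_atTop_nat 1).comp hidx.tendsto_atTop)
  have hps : ∀ m, ∑ i ∈ Finset.range (idx m + 1), a' i • e i
      = t • e 0 + ∑ k ∈ Finset.range m, ((f k : E)) := by
    intro m
    have h0' : a' 0 = t := Function.update_self 0 t a
    rw [partial_sum_idx hidx0 hidx a' m, h0']
    congr 1
    exact Finset.sum_congr rfl fun k _ => hblocks' k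
  have hblocksum : Tendsto (fun m => ∑ k ∈ Finset.range m, ((f k : E))) atTop (nhds (y - t • e 0)) := by
    have := hsub
    simp only [hps] at this
    have h2 := this.sub (tendsto_const_nhds (x := t • e 0))
    simpa using h2
  refine ⟨y - t • e 0, hblocksum, ?_⟩
  intro hzero
  have hy0 : y = 0 := by
    have : y - t • e 0 + t • e 0 = 0 := hzero
    simpa using this
  -- uniqueness at 0
  obtain ⟨b, -, hu⟩ := hbasis 0
  have h1 : a' = b := hu _ (hy0 ▸ hy)
  have h2 : (fun _ : ℕ => (0:ℝ)) = b := hu _ (by simpa using tendsto_const_nhds)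
  have ha'0 : ∀ i, a' i = 0 := fun i => by
    rw [h1]; exact (congrFun h2 i).symm
  constructor
  · intro k
    rw [← hblocks' k]
    refine Finset.sum_eq_zero fun i _ => by rw [ha'0 i, zero_smul]
  · simpa [ha'] using ha'0 0

end Stmt11Aux
end Chunk2

section Chunk3
open Filter Finset Topology
namespace Stmt11Aux

variable {E : Type*} [NormedAddCommGroup E] [NormedSpace ℝ E]
  {e : ℕ → E} {idx : ℕ → ℕ}

/-- the c₀-sum of the blocks, as a submodule of `lp _ ∞`. -/
noncomputable def c0sub (e : ℕ → E) (idx : ℕ → ℕ) : Submodule ℝ (lp (fun k => blockSpace E e idx k) ∞) where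
  carrier := {f | Tendsto (fun k => ‖(f : ∀ k, blockSpace E e idx k) k‖) atTop (nhds 0)}
  zero_mem' := by
    simpa [lp.coeFn_zero] using (tendsto_const_nhds :
      Tendsto (fun _ : ℕ => (0:ℝ)) atTop (nhds 0))
  add_mem' := by
    intro f g hf hg
    refine squeeze_zero (fun k => norm_nonneg _) (g := fun k =>
      ‖(f : ∀ k, blockSpace E e idx k) k‖ + ‖(g : ∀ k, blockSpace E e idx k) k‖) ?_ ?_
    · intro k
      have : ((f + g : lp (fun k => blockSpace E e idx k) ∞) : ∀ k, blockSpace E e idx k) k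
          = (f : ∀ k, blockSpace E e idx k) k + (g : ∀ k, blockSpace E e idx k) k := by
        rw [lp.coeFn_add]; rfl
      rw [this]
      exact norm_add_le _ _
    · simpa using hf.add hg
  smul_mem' := by
    intro c f hf
    have : ∀ k, ‖((c • f : lp (fun k => blockSpace E e idx k) ∞) : ∀ k, blockSpace E e idx k) k‖
        = ‖c‖ * ‖(f : ∀ k, blockSpace E e idx k) k‖ := by
      intro k
      rw [lp.coeFn_smul]
      simp [norm_smul]
    simp only [Set.mem_setOf_eq, this]
    simpa using hf.const_mul ‖c‖

theorem isClosed_c0sub : IsClosed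
    {f : lp (fun k => blockSpace E e idx k) ∞ |
      Tendsto (fun k => ‖(f : ∀ k, blockSpace E e idx k) k‖) atTop (nhds 0)} := by
  refine IsSeqClosed.isClosed ?_
  intro u x hu hx
  show Tendsto (fun k => ‖(x : ∀ k, blockSpace E e idx k) k‖) atTop (nhds 0)
  rw [Metric.tendsto_atTop]
  intro ε hε
  obtain ⟨N, hN⟩ := Metric.tendsto_atTop.mp hx (ε/2) (by linarith)
  have hdist : ‖u N - x‖ < ε/2 := by
    have := hN N le_rfl
    rwa [dist_eq_norm] at this
  obtain ⟨M, hM⟩ := Metric.tendsto_atTop.mp (hu N) (ε/2) (by linarith)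
  refine ⟨M, fun k hk => ?_⟩
  have h1 : ‖(x : ∀ k, blockSpace E e idx k) k‖
      ≤ ‖(u N : ∀ k, blockSpace E e idx k) k‖ + ‖u N - x‖ := by
    have heq : (x : ∀ k, blockSpace E e idx k) k
        = (u N : ∀ k, blockSpace E e idx k) k - ((u N - x : lp (fun k => blockSpace E e idx k) ∞)
          : ∀ k, blockSpace E e idx k) k := by
      rw [lp.coeFn_sub]; simp
    rw [heq]
    refine le_trans (norm_sub_le _ _) ?_
    gcongr
    exact lp.norm_apply_le_norm ENNReal.top_ne_zero _ k
  have h2 := hM k hk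
  rw [Real.dist_eq] at h2 ⊢
  have h3 : ‖(u N : ∀ k, blockSpace E e idx k) k‖ < ε/2 := by
    simpa using h2
  have : ‖(x : ∀ k, blockSpace E e idx k) k‖ < ε := by linarith
  simpa [abs_of_nonneg (norm_nonneg _)] using this

/-- build an element of `c0sub` from components -/
noncomputable def mk0 (x : ∀ k, blockSpace E e idx k)
    (h : Tendsto (fun k => ‖(x k : E)‖) atTop (nhds 0)) : ↥(c0sub e idx) :=
  ⟨⟨x, memℓp_infty (by
      have := h.bddAbove_range
      simpa [Set.range_comp] using this)⟩, by
    exact h⟩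

@[simp] theorem mk0_apply (x : ∀ k, blockSpace E e idx k)
    (h : Tendsto (fun k => ‖(x k : E)‖) atTop (nhds 0)) (k : ℕ) :
    (((mk0 x h : ↥(c0sub e idx)) : lp (fun k => blockSpace E e idx k) ∞)
      : ∀ k, blockSpace E e idx k) k = x k := rfl

/-- evaluation at `k` as a linear map on `c0sub` -/
noncomputable def evalL (e : ℕ → E) (idx : ℕ → ℕ) (k : ℕ) :
    ↥(c0sub e idx) →ₗ[ℝ] E where
  toFun f := (((f : lp (fun k => blockSpace E e idx k) ∞) : ∀ k, blockSpace E e idx k) k : E)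
  map_add' f g := by
    have h : (((f + g : ↥(c0sub e idx)) : lp (fun k => blockSpace E e idx k) ∞)
        : ∀ k, blockSpace E e idx k) k
        = ((f : lp (fun k => blockSpace E e idx k) ∞) : ∀ k, blockSpace E e idx k) k
          + ((g : lp (fun k => blockSpace E e idx k) ∞) : ∀ k, blockSpace E e idx k) k := by
      rw [Submodule.coe_add, lp.coeFn_add]; rfl
    show ((((f + g : ↥(c0sub e idx)) : lp (fun k => blockSpace E e idx k) ∞)
        : ∀ k, blockSpace E e idx k) k : E) = _
    rw [h, Submodule.coe_add]
  map_smul' c f := by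
    have h : (((c • f : ↥(c0sub e idx)) : lp (fun k => blockSpace E e idx k) ∞)
        : ∀ k, blockSpace E e idx k) k
        = c • ((f : lp (fun k => blockSpace E e idx k) ∞) : ∀ k, blockSpace E e idx k) k := by
      rw [Submodule.coe_smul, lp.coeFn_smul]; rfl
    show ((((c • f : ↥(c0sub e idx)) : lp (fun k => blockSpace E e idx k) ∞)
        : ∀ k, blockSpace E e idx k) k : E) = _
    rw [h, Submodule.coe_smul]
    rfl

theorem evalL_norm_le (k : ℕ) (f : ↥(c0sub e idx)) : ‖evalL e idx k f‖ ≤ ‖f‖ := by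
  have := lp.norm_apply_le_norm ENNReal.top_ne_zero
    ((f : lp (fun k => blockSpace E e idx k) ∞)) k
  exact this

/-- evaluation at `k` as a continuous linear map on `c0sub` -/
noncomputable def evalCLM (e : ℕ → E) (idx : ℕ → ℕ) (k : ℕ) :
    ↥(c0sub e idx) →L[ℝ] E :=
  LinearMap.mkContinuous (evalL e idx k) 1 (fun f => by
    rw [one_mul]; exact evalL_norm_le k f)

@[simp] theorem evalCLM_apply (k : ℕ) (f : ↥(c0sub e idx)) :
    evalCLM e idx k f
      = (((f : lp (fun k => blockSpace E e idx k) ∞) : ∀ k, blockSpace E e idx k) k : E) := rfl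

theorem surj_core
    (hbasis : ∀ x : E, ∃! a : ℕ → ℝ,
      Tendsto (fun n => ∑ i ∈ Finset.range n, a i • e i) atTop (nhds x))
    (hidx0 : idx 0 = 0) (hidx : StrictMono idx) (y : E) :
    ∃ (x : ∀ k, blockSpace E e idx k) (t : ℝ),
      Tendsto (fun k => ‖(x k : E)‖) atTop (nhds 0) ∧
      Tendsto (fun m => ∑ k ∈ Finset.range m, (x k : E)) atTop (nhds (y - t • e 0)) := by
  obtain ⟨a, ha, -⟩ := hbasis y
  have hmemb : ∀ k, (∑ i ∈ Finset.Ioc (idx k) (idx (k+1)), a i • e i) ∈ blockSpace E e idx k := by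
    intro k
    refine Submodule.sum_mem _ fun i hi => Submodule.smul_mem _ _ (Submodule.subset_span ?_)
    exact ⟨i, by simpa [Set.mem_Ioc, Finset.mem_Ioc] using hi, rfl⟩
  refine ⟨fun k => ⟨_, hmemb k⟩, a 0, ?_, ?_⟩
  · -- block norms tend to zero
    have hdiff : ∀ k, (∑ i ∈ Finset.Ioc (idx k) (idx (k+1)), a i • e i)
        = (∑ i ∈ Finset.range (idx (k+1) + 1), a i • e i)
          - (∑ i ∈ Finset.range (idx k + 1), a i • e i) := by
      intro k
      rw [partial_sum_idx hidx0 hidx a (k+1), partial_sum_idx hidx0 hidx a k,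
        Finset.sum_range_succ]
      abel
    have h1 : Tendsto (fun k => ∑ i ∈ Finset.range (idx (k+1) + 1), a i • e i)
        atTop (nhds y) :=
      ha.comp ((tendsto_add_atTop_nat 1).comp (hidx.tendsto_atTop.comp (tendsto_add_atTop_nat 1)))
    have h2 : Tendsto (fun k => ∑ i ∈ Finset.range (idx k + 1), a i • e i)
        atTop (nhds y) :=
      ha.comp ((tendsto_add_atTop_nat 1).comp hidx.tendsto_atTop)
    have h3 := h1.sub h2
    rw [sub_self] at h3
    have h4 : Tendsto (fun k => ∑ i ∈ Finset.Ioc (idx k) (idx (k+1)), a i • e i)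
        atTop (nhds 0) := by
      simp only [hdiff]; exact h3
    simpa using h4.norm
  · have h2 : Tendsto (fun k => ∑ i ∈ Finset.range (idx k + 1), a i • e i)
        atTop (nhds y) :=
      ha.comp ((tendsto_add_atTop_nat 1).comp hidx.tendsto_atTop)
    have h5 : ∀ m, (∑ k ∈ Finset.range m, (∑ i ∈ Finset.Ioc (idx k) (idx (k+1)), a i • e i))
        = (∑ i ∈ Finset.range (idx m + 1), a i • e i) - a 0 • e 0 := by
      intro m
      rw [partial_sum_idx hidx0 hidx a m]
      abel
    show Tendsto (fun m => ∑ k ∈ Finset.range m,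
      (∑ i ∈ Finset.Ioc (idx k) (idx (k+1)), a i • e i)) atTop (nhds (y - a 0 • e 0))
    simp only [h5]
    exact h2.sub tendsto_const_nhds

end Stmt11Aux
end Chunk3

section Chunk4
open Filter Finset Topology
namespace Stmt11Aux

variable {E : Type*} [NormedAddCommGroup E] [NormedSpace ℝ E]
  {e : ℕ → E} {idx : ℕ → ℕ}

theorem c0_ext {f g : ↥(c0sub e idx)}
    (h : ∀ k, ((f : lp (fun k => blockSpace E e idx k) ∞) : ∀ k, blockSpace E e idx k) k
      = ((g : lp (fun k => blockSpace E e idx k) ∞) : ∀ k, blockSpace E e idx k) k) :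
    f = g :=
  Subtype.ext (Subtype.ext (funext h))

theorem c0_apply_add (f g : ↥(c0sub e idx)) (k : ℕ) :
    (((f + g : ↥(c0sub e idx)) : lp (fun k => blockSpace E e idx k) ∞)
      : ∀ k, blockSpace E e idx k) k
    = ((f : lp (fun k => blockSpace E e idx k) ∞) : ∀ k, blockSpace E e idx k) k
      + ((g : lp (fun k => blockSpace E e idx k) ∞) : ∀ k, blockSpace E e idx k) k := by
  rw [Submodule.coe_add, lp.coeFn_add]; rfl

theorem c0_apply_smul (c : ℝ) (f : ↥(c0sub e idx)) (k : ℕ) :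
    (((c • f : ↥(c0sub e idx)) : lp (fun k => blockSpace E e idx k) ∞)
      : ∀ k, blockSpace E e idx k) k
    = c • ((f : lp (fun k => blockSpace E e idx k) ∞) : ∀ k, blockSpace E e idx k) k := by
  rw [Submodule.coe_smul, lp.coeFn_smul]; rfl

theorem c0_apply_zero (k : ℕ) :
    (((0 : ↥(c0sub e idx)) : lp (fun k => blockSpace E e idx k) ∞)
      : ∀ k, blockSpace E e idx k) k = 0 := rfl

theorem c0_norm_apply_le (f : ↥(c0sub e idx)) (k : ℕ) :
    ‖(((f : lp (fun k => blockSpace E e idx k) ∞) : ∀ k, blockSpace E e idx k) k : E)‖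
      ≤ ‖f‖ :=
  lp.norm_apply_le_norm ENNReal.top_ne_zero (f : lp (fun k => blockSpace E e idx k) ∞) k

/-- the backward-shift-along-`u` map, componentwise -/
noncomputable def Dcomp (φ : ℕ → E →L[ℝ] ℝ) (u : ∀ k, blockSpace E e idx k)
    (x : ∀ k, blockSpace E e idx k) (k : ℕ) : blockSpace E e idx k :=
  x k - (φ k (x k : E)) • u k + (φ (k+1) (x (k+1) : E)) • u k

theorem Dcomp_coe (φ : ℕ → E →L[ℝ] ℝ) (u : ∀ k, blockSpace E e idx k)
    (x : ∀ k, blockSpace E e idx k) (k : ℕ) :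
    (Dcomp φ u x k : E) = (x k : E) - (φ k (x k : E)) • (u k : E)
      + (φ (k+1) (x (k+1) : E)) • (u k : E) := by
  simp [Dcomp]

theorem Dcomp_add (φ : ℕ → E →L[ℝ] ℝ) (u : ∀ k, blockSpace E e idx k)
    (x y : ∀ k, blockSpace E e idx k) (k : ℕ) :
    Dcomp φ u (fun k => x k + y k) k = Dcomp φ u x k + Dcomp φ u y k := by
  apply Subtype.ext
  simp only [Dcomp_coe, Submodule.coe_add, map_add, add_smul]
  abel

theorem Dcomp_smul (φ : ℕ → E →L[ℝ] ℝ) (u : ∀ k, blockSpace E e idx k)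
    (c : ℝ) (x : ∀ k, blockSpace E e idx k) (k : ℕ) :
    Dcomp φ u (fun k => c • x k) k = c • Dcomp φ u x k := by
  apply Subtype.ext
  simp only [Dcomp_coe, SetLike.val_smul, map_smul, smul_sub, smul_add, smul_smul,
    smul_eq_mul]

theorem Dcomp_norm_le (φ : ℕ → E →L[ℝ] ℝ) (hφ : ∀ k, ‖φ k‖ = 1)
    (u : ∀ k, blockSpace E e idx k) (hu : ∀ k, ‖(u k : E)‖ = 1)
    (x : ∀ k, blockSpace E e idx k) (k : ℕ) :
    ‖(Dcomp φ u x k : E)‖ ≤ 2 * ‖(x k : E)‖ + ‖(x (k+1) : E)‖ := by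
  have hb : ∀ j (z : E), ‖φ j z‖ ≤ ‖z‖ := fun j z => by
    simpa [hφ j] using (φ j).le_opNorm z
  rw [Dcomp_coe]
  refine le_trans (norm_add_le _ _) ?_
  have h1 : ‖(x k : E) - (φ k (x k : E)) • (u k : E)‖ ≤ 2 * ‖(x k : E)‖ := by
    refine le_trans (norm_sub_le _ _) ?_
    have : ‖(φ k (x k : E)) • (u k : E)‖ ≤ ‖(x k : E)‖ := by
      rw [norm_smul, hu k, mul_one]
      exact hb k _
    linarith
  have h2 : ‖(φ (k+1) (x (k+1) : E)) • (u k : E)‖ ≤ ‖(x (k+1) : E)‖ := by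
    rw [norm_smul, hu k, mul_one]
    exact hb (k+1) _
  linarith

/-- the forward shift is a section of `Dcomp` -/
theorem Dcomp_section (φ : ℕ → E →L[ℝ] ℝ) (u : ∀ k, blockSpace E e idx k)
    (hu1 : ∀ k, φ k (u k : E) = 1)
    (x : ∀ k, blockSpace E e idx k) (c : ℕ → ℝ)
    (hc : ∀ k, c (k+1) = φ k (x k : E)) (k : ℕ) :
    Dcomp φ u (fun k => x k - (φ k (x k : E)) • u k + c k • u k) k = x k := by
  have key : ∀ j, φ j ((x j - (φ j (x j : E)) • u j + c j • u j : blockSpace E e idx j) : E)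
      = c j := by
    intro j
    simp only [Submodule.coe_add, AddSubgroupClass.coe_sub, SetLike.val_smul, map_add,
      map_sub, map_smul, smul_eq_mul, hu1 j, mul_one]
    ring
  apply Subtype.ext
  rw [Dcomp_coe]
  simp only [key]
  rw [hc k]
  simp only [Submodule.coe_add, AddSubgroupClass.coe_sub, SetLike.val_smul]
  abel

/-- injectivity chase -/
theorem Dcomp_eq_zero (φ : ℕ → E →L[ℝ] ℝ) (u : ∀ k, blockSpace E e idx k)
    (hu1 : ∀ k, φ k (u k : E) = 1)
    (x : ∀ k, blockSpace E e idx k)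
    (h : ∀ k, (Dcomp φ u x k : E) = 0) (h0 : φ 0 (x 0 : E) = 0) (k : ℕ) :
    (x k : E) = 0 := by
  have hphi : ∀ k, φ k (x k : E) = 0 := by
    intro k
    cases k with
    | zero => exact h0
    | succ n =>
      have h1 := congrArg (φ n) (h n)
      rw [Dcomp_coe] at h1
      simp only [map_add, map_sub, map_smul, smul_eq_mul, hu1 n, mul_one, map_zero] at h1
      linarith
  have h1 := h k
  rw [Dcomp_coe, hphi k, hphi (k+1)] at h1
  simpa using h1
end Stmt11Aux
end Chunk4

section Chunk4b
open Filter Finset Topology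
namespace Stmt11Aux

variable {E : Type*} [NormedAddCommGroup E] [NormedSpace ℝ E]
  {e : ℕ → E} {idx : ℕ → ℕ}

theorem Psec_phi (φ : ℕ → E →L[ℝ] ℝ) (u : ∀ k, blockSpace E e idx k)
    (hu1 : ∀ k, φ k (u k : E) = 1) (x : ∀ k, blockSpace E e idx k) (c : ℕ → ℝ) (j : ℕ) :
    φ j ((x j - (φ j (x j : E)) • u j + c j • u j : blockSpace E e idx j) : E) = c j := by
  simp only [Submodule.coe_add, AddSubgroupClass.coe_sub, SetLike.val_smul, map_add,
    map_sub, map_smul, smul_eq_mul, hu1 j, mul_one]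
  ring

theorem Psec_norm_le (φ : ℕ → E →L[ℝ] ℝ) (hφ : ∀ k (z : E), ‖φ k z‖ ≤ ‖z‖)
    (u : ∀ k, blockSpace E e idx k) (hun : ∀ k, ‖(u k : E)‖ = 1)
    (x : ∀ k, blockSpace E e idx k) (c : ℕ → ℝ) (k : ℕ) :
    ‖((x k - (φ k (x k : E)) • u k + c k • u k : blockSpace E e idx k) : E)‖
      ≤ 2 * ‖(x k : E)‖ + |c k| := by
  simp only [Submodule.coe_add, AddSubgroupClass.coe_sub, SetLike.val_smul]
  refine le_trans (norm_add_le _ _) ?_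
  have h1 : ‖(x k : E) - (φ k (x k : E)) • (u k : E)‖ ≤ 2 * ‖(x k : E)‖ := by
    refine le_trans (norm_sub_le _ _) ?_
    have : ‖(φ k (x k : E)) • (u k : E)‖ ≤ ‖(x k : E)‖ := by
      rw [norm_smul, hun k, mul_one]
      exact hφ k _
    linarith
  have h2 : ‖c k • (u k : E)‖ = |c k| := by
    rw [norm_smul, hun k, mul_one, Real.norm_eq_abs]
  linarith

/-- Finite `1/2`-norming families of functionals for finite-dimensional subspaces. -/
theorem exists_norming (V : Submodule ℝ E) [FiniteDimensional ℝ V] :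
    ∃ L : List (E →L[ℝ] ℝ), (∀ g ∈ L, ‖g‖ ≤ 1) ∧
      ∀ z : E, z ∈ V → z ≠ 0 → ∃ g ∈ L, ‖z‖ ≤ 2 * ‖g z‖ := by
  have hcs : IsCompact (Metric.sphere (0 : V) 1) := isCompact_sphere 0 1
  have hne : ∀ v : Metric.sphere (0 : V) 1, ((v : V) : E) ≠ 0 := by
    intro v
    have h1 : ‖(v : V)‖ = 1 := mem_sphere_zero_iff_norm.mp v.2
    intro h
    rw [show ‖(v : V)‖ = ‖((v : V) : E)‖ from rfl, h, norm_zero] at h1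
    exact one_ne_zero h1.symm
  choose g hg1 hgv using fun v : Metric.sphere (0 : V) 1 =>
    exists_dual_vector ℝ ((v : V) : E) (norm_ne_zero_iff.mpr (hne v))
  let U : Metric.sphere (0 : V) 1 → Set V := fun v => {w : V | 1/2 < g v (w : E)}
  have hUopen : ∀ v, IsOpen (U v) :=
    fun v => isOpen_lt continuous_const ((g v).continuous.comp continuous_subtype_val)
  have hcover : Metric.sphere (0 : V) 1 ⊆ ⋃ v, U v := by
    intro w hw
    refine Set.mem_iUnion.mpr ⟨⟨w, hw⟩, ?_⟩
    show 1/2 < g ⟨w, hw⟩ (w : E)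
    rw [hgv ⟨w, hw⟩]
    rw [show ‖((w : V) : E)‖ = ‖w‖ from rfl, mem_sphere_zero_iff_norm.mp hw]
    norm_num
  obtain ⟨t, ht⟩ := hcs.elim_finite_subcover U hUopen hcover
  refine ⟨t.toList.map g, ?_, ?_⟩
  · intro f hf
    rw [List.mem_map] at hf
    obtain ⟨v, -, rfl⟩ := hf
    exact le_of_eq (hg1 v)
  · intro z hz hz0
    have hzn : (0:ℝ) < ‖z‖ := norm_pos_iff.mpr hz0
    have hw' : (‖z‖⁻¹ • (⟨z, hz⟩ : V)) ∈ Metric.sphere (0 : V) 1 := by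
      rw [mem_sphere_zero_iff_norm]
      rw [norm_smul]
      show ‖‖z‖⁻¹‖ * ‖((⟨z, hz⟩ : V) : E)‖ = 1
      rw [norm_inv, norm_norm]
      exact inv_mul_cancel₀ (ne_of_gt hzn)
    obtain ⟨v, hv, hvU⟩ := Set.mem_iUnion₂.mp (ht hw')
    refine ⟨g v, List.mem_map.mpr ⟨v, Finset.mem_toList.mpr hv, rfl⟩, ?_⟩
    have h1 : 1/2 < g v ((‖z‖⁻¹ • (⟨z, hz⟩ : V) : V) : E) := hvU
    have h2 : ((‖z‖⁻¹ • (⟨z, hz⟩ : V) : V) : E) = ‖z‖⁻¹ • z := rfl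
    rw [h2, map_smul, smul_eq_mul] at h1
    have h3 : ‖z‖ / 2 < g v z := by
      have h5 := mul_lt_mul_of_pos_left h1 hzn
      rw [← mul_assoc, mul_inv_cancel₀ (ne_of_gt hzn), one_mul] at h5
      linarith
    have h4 : g v z ≤ ‖g v z‖ := le_abs_self _
    linarith

end Stmt11Aux
end Chunk4b

section Main
open Filter Finset Topology Stmt11Aux

/-- If `E` has a Schauder basis `(eᵢ)` and a strictly increasing sequence `(i_k)`
(with `i₀ = 0`) such that `∑ aᵢ eᵢ` converges whenever the block norms tend to `0`,
then `E` is isomorphic to the c₀-direct sum `(∑ ⊕ E_k)_{c₀}` (realized as the closed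
subspace of `lp E ∞` of sequences whose norms vanish at infinity), and in particular
`E` embeds into `c₀`. -/
theorem stmt11 (E : Type*) [NormedAddCommGroup E] [NormedSpace ℝ E] [CompleteSpace E]
    (e : ℕ → E)
    (hbasis : ∀ x : E, ∃! a : ℕ → ℝ,
      Filter.Tendsto (fun n => ∑ i ∈ Finset.range n, a i • e i) Filter.atTop (nhds x))
    (idx : ℕ → ℕ) (hidx0 : idx 0 = 0) (hidx : StrictMono idx)
    (hblock : ∀ a : ℕ → ℝ,
      Filter.Tendsto (fun k => ‖∑ i ∈ Finset.Ioc (idx k) (idx (k + 1)), a i • e i‖)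
        Filter.atTop (nhds 0) →
      ∃ x : E, Filter.Tendsto (fun n => ∑ i ∈ Finset.range n, a i • e i)
        Filter.atTop (nhds x)) :
    (∃ T : E →L[ℝ] ↥(lp (fun k => blockSpace E e idx k) ∞),
      (∃ a > (0 : ℝ), ∃ b > (0 : ℝ), ∀ x : E, a * ‖x‖ ≤ ‖T x‖ ∧ ‖T x‖ ≤ b * ‖x‖) ∧
      Set.range T =
        {f : ↥(lp (fun k => blockSpace E e idx k) ∞) |
          Filter.Tendsto (fun k => ‖(f : ∀ k, blockSpace E e idx k) k‖)
            Filter.atTop (nhds 0)}) ∧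
    (∃ S : E →L[ℝ] C₀(ℕ, ℝ), ∃ a > (0 : ℝ), ∃ b > (0 : ℝ),
      ∀ x : E, a * ‖x‖ ≤ ‖S x‖ ∧ ‖S x‖ ≤ b * ‖x‖) := by
  classical
  letI instFD : ∀ k, FiniteDimensional ℝ (blockSpace E e idx k) := bs_fd e idx
  haveI hcomp : CompleteSpace ↥(c0sub e idx) :=
    (isClosed_c0sub (e := e) (idx := idx)).completeSpace_coe
  -- coordinates
  let coords : ↥(c0sub e idx) → ∀ k, blockSpace E e idx k :=
    fun f => ((f : lp (fun k => blockSpace E e idx k) ∞) : ∀ k, blockSpace E e idx k)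
  have hcoords0 : ∀ f : ↥(c0sub e idx),
      Tendsto (fun k => ‖(coords f k : E)‖) atTop (nhds 0) := fun f => f.2
  have hcore := fun (f : ↥(c0sub e idx)) (t : ℝ) =>
    core hbasis hidx0 hidx hblock (coords f) (hcoords0 f) t
  have hpt : ∀ f : ↥(c0sub e idx), ∃ x : E,
      Tendsto (fun m => ∑ k ∈ Finset.range m, (coords f k : E)) atTop (nhds x) :=
    fun f => ⟨(hcore f 0).choose, (hcore f 0).choose_spec.1⟩
  choose sumF hsumF using hpt
  have huniq : ∀ (f : ↥(c0sub e idx)) (t : ℝ), sumF f + t • e 0 = 0 →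
      (∀ k, (coords f k : E) = 0) ∧ t = 0 := by
    intro f t h
    obtain ⟨x, hx, hinj⟩ := hcore f t
    have hxe : x = sumF f := tendsto_nhds_unique hx (hsumF f)
    exact hinj (by rw [hxe]; exact h)
  -- the summation map, continuous by Banach–Steinhaus
  let PS : ℕ → (↥(c0sub e idx) →L[ℝ] E) := fun m => ∑ k ∈ Finset.range m, evalCLM e idx k
  have hPS : ∀ m f, PS m f = ∑ k ∈ Finset.range m, (coords f k : E) := by
    intro m f
    simp only [PS, ContinuousLinearMap.coe_sum', Finset.sum_apply]
    rfl
  let Sig : ↥(c0sub e idx) →L[ℝ] E := continuousLinearMapOfTendsto PS (f := sumF) (by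
    rw [tendsto_pi_nhds]
    intro f
    have heq : (fun m => PS m f) = fun m => ∑ k ∈ Finset.range m, (coords f k : E) :=
      funext fun m => hPS m f
    rw [heq]
    exact hsumF f)
  have hSig : ∀ f, Sig f = sumF f := fun f => rfl
  -- dual vectors and unit vectors in each block
  have hvne : ∀ k, e (idx k + 1) ≠ 0 := fun k => e_ne_zero hbasis _
  have hvmem : ∀ k, e (idx k + 1) ∈ blockSpace E e idx k := fun k =>
    Submodule.subset_span ⟨idx k + 1, ⟨Nat.lt_succ_self _, hidx (Nat.lt_succ_self k)⟩, rfl⟩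
  choose φ hφ1 hφv using fun k => exists_dual_vector ℝ (e (idx k + 1)) (norm_ne_zero_iff.mpr (hvne k))
  let u : ∀ k, ↥(blockSpace E e idx k) := fun k =>
    ⟨‖e (idx k + 1)‖⁻¹ • e (idx k + 1), Submodule.smul_mem _ _ (hvmem k)⟩
  have hun : ∀ k, ‖(u k : E)‖ = 1 := by
    intro k
    show ‖‖e (idx k + 1)‖⁻¹ • e (idx k + 1)‖ = 1
    rw [norm_smul, norm_inv, norm_norm]
    exact inv_mul_cancel₀ (norm_ne_zero_iff.mpr (hvne k))
  have hu1 : ∀ k, φ k (u k : E) = 1 := by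
    intro k
    show φ k (‖e (idx k + 1)‖⁻¹ • e (idx k + 1)) = 1
    rw [map_smul, smul_eq_mul, hφv k]
    exact inv_mul_cancel₀ (norm_ne_zero_iff.mpr (hvne k))
  have hφle : ∀ k (z : E), ‖φ k z‖ ≤ ‖z‖ := fun k z => by
    simpa [hφ1 k] using (φ k).le_opNorm z
  -- the backward shift map as a CLM on c0sub
  have hD0 : ∀ f : ↥(c0sub e idx),
      Tendsto (fun k => ‖(Dcomp φ u (coords f) k : E)‖) atTop (nhds 0) := by
    intro f
    refine squeeze_zero (fun k => norm_nonneg _)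
      (fun k => Dcomp_norm_le φ hφ1 u hun (coords f) k) ?_
    have h1 := (hcoords0 f).const_mul 2
    have h2 := (hcoords0 f).comp (tendsto_add_atTop_nat 1)
    simpa using h1.add h2
  let Dlin : ↥(c0sub e idx) →ₗ[ℝ] ↥(c0sub e idx) :=
    { toFun := fun f => mk0 (Dcomp φ u (coords f)) (hD0 f)
      map_add' := by
        intro f g
        refine c0_ext fun k => ?_
        show Dcomp φ u (coords (f + g)) k = _
        have hc : coords (f + g) = fun k => coords f k + coords g k :=
          funext fun k => c0_apply_add f g k
        rw [hc, Dcomp_add,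
          c0_apply_add (mk0 (Dcomp φ u (coords f)) (hD0 f)) (mk0 (Dcomp φ u (coords g)) (hD0 g)) k]
        rfl
      map_smul' := by
        intro c f
        simp only [RingHom.id_apply]
        refine c0_ext fun k => ?_
        show Dcomp φ u (coords (c • f)) k = _
        have hc : coords (c • f) = fun k => c • coords f k :=
          funext fun k => c0_apply_smul c f k
        rw [hc, Dcomp_smul, c0_apply_smul c (mk0 (Dcomp φ u (coords f)) (hD0 f)) k]
        rfl }
  have hDlin_norm : ∀ f, ‖Dlin f‖ ≤ 3 * ‖f‖ := by
    intro f
    refine lp.norm_le_of_forall_le (by positivity) ?_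
    intro k
    have h1 : ‖(Dcomp φ u (coords f) k : E)‖
        ≤ 2 * ‖(coords f k : E)‖ + ‖(coords f (k+1) : E)‖ :=
      Dcomp_norm_le φ hφ1 u hun (coords f) k
    have h2 := c0_norm_apply_le f k
    have h3 := c0_norm_apply_le f (k+1)
    show ‖(Dcomp φ u (coords f) k : E)‖ ≤ 3 * ‖f‖
    linarith
  let Dclm : ↥(c0sub e idx) →L[ℝ] ↥(c0sub e idx) := Dlin.mkContinuous 3 hDlin_norm
  -- W = Σ ∘ D + φ₀(·₀) e₀  : the continuous bijection c0sub → E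
  let W : ↥(c0sub e idx) →L[ℝ] E :=
    Sig.comp Dclm + ((φ 0).comp (evalCLM e idx 0)).smulRight (e 0)
  have hW : ∀ f, W f = sumF (Dclm f) + (φ 0 (coords f 0 : E)) • e 0 := fun f => rfl
  have hWinj0 : ∀ f, W f = 0 → f = 0 := by
    intro f hf
    obtain ⟨hdz, ht⟩ := huniq (Dclm f) (φ 0 (coords f 0 : E)) (by rw [← hW f]; exact hf)
    have hzero : ∀ k, (Dcomp φ u (coords f) k : E) = 0 := fun k => hdz k
    have hxz := Dcomp_eq_zero φ u hu1 (coords f) hzero ht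
    refine c0_ext fun k => ?_
    rw [c0_apply_zero]
    exact Subtype.ext (hxz k)
  have hWinj : Function.Injective W := by
    intro f g hfg
    have : W (f - g) = 0 := by rw [map_sub, hfg, sub_self]
    have h := hWinj0 _ this
    exact sub_eq_zero.mp h
  have hWsurj : Function.Surjective W := by
    intro y
    obtain ⟨x, t, hx0, hxsum⟩ := surj_core hbasis hidx0 hidx y
    let c : ℕ → ℝ := fun k => Nat.rec t (fun n _ => φ n (x n : E)) k
    have hc0 : c 0 = t := rfl
    have hcs : ∀ k, c (k+1) = φ k (x k : E) := fun k => rfl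
    let Pc : ∀ k, ↥(blockSpace E e idx k) := fun k =>
      x k - (φ k (x k : E)) • u k + c k • u k
    have hcabs : Tendsto (fun k => |c k|) atTop (nhds 0) := by
      refine squeeze_zero' (Eventually.of_forall fun k => abs_nonneg _) ?_
        (hx0.comp (tendsto_sub_atTop_nat 1))
      filter_upwards [eventually_ge_atTop 1] with k hk
      obtain ⟨n, rfl⟩ := Nat.exists_eq_add_of_le hk
      have h1 : c (1 + n) = φ n (x n : E) := by rw [Nat.add_comm]
      have h2 : (1 + n) - 1 = n := by omega
      show |c (1 + n)| ≤ ‖(x ((1 + n) - 1) : E)‖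
      rw [h1, h2]
      exact hφle n _
    have hPc0 : Tendsto (fun k => ‖(Pc k : E)‖) atTop (nhds 0) := by
      refine squeeze_zero (fun k => norm_nonneg _)
        (fun k => Psec_norm_le φ hφle u hun x c k) ?_
      simpa using (hx0.const_mul 2).add hcabs
    let f : ↥(c0sub e idx) := mk0 Pc hPc0
    refine ⟨f, ?_⟩
    have hDf : Dclm f = mk0 x hx0 := by
      refine c0_ext fun k => ?_
      show Dcomp φ u Pc k = x k
      exact Dcomp_section φ u hu1 x c hcs k
    have hsx : sumF (mk0 x hx0) = y - t • e 0 :=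
      tendsto_nhds_unique (hsumF _) hxsum
    have hphi0 : φ 0 (coords f 0 : E) = t := by
      have := Psec_phi φ u hu1 x c 0
      rw [hc0] at this
      exact this
    rw [hW f, hDf, hsx, hphi0]
    abel
  -- the isomorphism and T
  let Weq := ContinuousLinearEquiv.ofBijective W (LinearMap.ker_eq_bot.mpr hWinj)
    (LinearMap.range_eq_top.mpr hWsurj)
  have hWeq : ∀ g, Weq g = W g := fun g => rfl
  let T : E →L[ℝ] ↥(lp (fun k => blockSpace E e idx k) ∞) :=
    (Submodule.subtypeL (c0sub e idx)).comp (Weq.symm : E →L[ℝ] ↥(c0sub e idx))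
  have hT : ∀ x : E, T x
      = ((Weq.symm x : ↥(c0sub e idx)) : lp (fun k => blockSpace E e idx k) ∞) :=
    fun x => rfl
  have hTn : ∀ x : E, ‖T x‖ = ‖Weq.symm x‖ := fun x => rfl
  have hTlow : ∀ x : E, (‖W‖ + 1)⁻¹ * ‖x‖ ≤ ‖T x‖ := by
    intro x
    rw [hTn]
    have h1 : ‖x‖ ≤ ‖W‖ * ‖Weq.symm x‖ := by
      conv_lhs => rw [← Weq.apply_symm_apply x]
      rw [hWeq]
      exact W.le_opNorm _
    have hpos : (0:ℝ) < ‖W‖ + 1 := by positivity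
    rw [inv_mul_le_iff₀ hpos]
    nlinarith [norm_nonneg (Weq.symm x)]
  have hTup : ∀ x : E,
      ‖T x‖ ≤ (‖(Weq.symm : E →L[ℝ] ↥(c0sub e idx))‖ + 1) * ‖x‖ := by
    intro x
    rw [hTn]
    have h1 := (Weq.symm : E →L[ℝ] ↥(c0sub e idx)).le_opNorm x
    have h2 : ‖Weq.symm x‖ = ‖(Weq.symm : E →L[ℝ] ↥(c0sub e idx)) x‖ := rfl
    rw [h2]
    nlinarith [norm_nonneg x]
  have hTrange : Set.range T =
      {f : ↥(lp (fun k => blockSpace E e idx k) ∞) |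
        Filter.Tendsto (fun k => ‖(f : ∀ k, blockSpace E e idx k) k‖)
          Filter.atTop (nhds 0)} := by
    ext g
    constructor
    · rintro ⟨x, rfl⟩
      exact (Weq.symm x).2
    · intro hg
      refine ⟨Weq ⟨g, hg⟩, ?_⟩
      rw [hT, Weq.symm_apply_apply]
  refine ⟨⟨T, ⟨(‖W‖ + 1)⁻¹, by positivity,
    ‖(Weq.symm : E →L[ℝ] ↥(c0sub e idx))‖ + 1, by positivity,
    fun x => ⟨hTlow x, hTup x⟩⟩, hTrange⟩, ?_⟩
  -- Part 2 : embedding into c₀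
  have hnorming := fun k => exists_norming (E := E) (blockSpace E e idx k)
  choose L hL1 hL2 using hnorming
  let P : ℕ → E →L[ℝ] E := fun k => (evalCLM e idx k).comp (Weq.symm : E →L[ℝ] ↥(c0sub e idx))
  have hPeq : ∀ (k : ℕ) (x : E), P k x = (coords (Weq.symm x) k : E) := fun k x => rfl
  have hPmem : ∀ (k : ℕ) (x : E), P k x ∈ blockSpace E e idx k :=
    fun k x => (coords (Weq.symm x) k).2
  have hPle : ∀ (k : ℕ) (x : E), ‖P k x‖ ≤ ‖T x‖ := by
    intro k x
    rw [hPeq, hTn]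
    exact c0_norm_apply_le (Weq.symm x) k
  have hP0 : ∀ x : E, Tendsto (fun k => ‖P k x‖) atTop (nhds 0) := fun x => (Weq.symm x).2
  let G : ℕ × ℕ → E →L[ℝ] ℝ := fun p => ((L p.1).getD p.2 0).comp (P p.1)
  have hGval : ∀ (p : ℕ × ℕ) (x : E), G p x = ((L p.1).getD p.2 0) (P p.1 x) := fun p x => rfl
  have hGle : ∀ (p : ℕ × ℕ) (x : E), ‖G p x‖ ≤ ‖P p.1 x‖ := by
    intro p x
    have hn : ‖(L p.1).getD p.2 0‖ ≤ 1 := by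
      by_cases h : p.2 < (L p.1).length
      · rw [List.getD_eq_getElem _ _ h]
        exact hL1 p.1 _ (List.getElem_mem h)
      · rw [List.getD_eq_default _ _ (not_lt.mp h)]
        simp
    rw [hGval]
    calc ‖((L p.1).getD p.2 0) (P p.1 x)‖ ≤ ‖(L p.1).getD p.2 0‖ * ‖P p.1 x‖ :=
          ((L p.1).getD p.2 0).le_opNorm _
      _ ≤ 1 * ‖P p.1 x‖ := by
          have := norm_nonneg (P p.1 x); nlinarith
      _ = ‖P p.1 x‖ := one_mul _
  let pe : ℕ ≃ ℕ × ℕ := (Denumerable.eqv (ℕ × ℕ)).symm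
  have hGten : ∀ x : E, Tendsto (fun p : ℕ × ℕ => G p x) cofinite (nhds 0) := by
    intro x
    refine Metric.tendsto_nhds.mpr fun ε hε => ?_
    rw [Filter.eventually_cofinite]
    obtain ⟨K, hK⟩ := Metric.tendsto_atTop.mp (hP0 x) ε hε
    set M := (Finset.range K).sup (fun k => (L k).length) with hM
    refine Set.Finite.subset ((Finset.range K ×ˢ Finset.range M : Finset (ℕ × ℕ)).finite_toSet) ?_
    intro p hp
    simp only [Set.mem_setOf_eq] at hp
    have hp2 : p.2 < (L p.1).length := by
      by_contra h
      have hz : G p x = 0 := by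
        rw [hGval, List.getD_eq_default _ _ (not_lt.mp h)]
        rfl
      rw [hz] at hp
      rw [dist_self] at hp
      exact hp hε
    have hp1 : p.1 < K := by
      by_contra h
      have h1 := hK p.1 (not_lt.mp h)
      rw [Real.dist_eq, sub_zero, abs_of_nonneg (norm_nonneg _)] at h1
      have h2 : dist (G p x) 0 < ε := by
        rw [Real.dist_eq, sub_zero]
        calc |G p x| = ‖G p x‖ := rfl
          _ ≤ ‖P p.1 x‖ := hGle p x
          _ < ε := h1
      exact hp h2
    simp only [Finset.coe_product, Set.mem_prod, Finset.mem_coe, Finset.mem_range]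
    refine ⟨hp1, lt_of_lt_of_le hp2 ?_⟩
    rw [hM]
    exact Finset.le_sup (f := fun k => (L k).length) (Finset.mem_range.mpr hp1)
  let Sfun : E → C₀(ℕ, ℝ) := fun x =>
    { toContinuousMap := ⟨fun n => G (pe n) x, continuous_of_discreteTopology⟩
      zero_at_infty' := by
        rw [cocompact_eq_cofinite]
        exact (hGten x).comp pe.injective.tendsto_cofinite }
  have hSfun : ∀ (x : E) (n : ℕ), Sfun x n = G (pe n) x := fun x n => rfl
  have hSnorm_le : ∀ (x : E) (C : ℝ), 0 ≤ C → (∀ n, ‖Sfun x n‖ ≤ C) → ‖Sfun x‖ ≤ C := by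
    intro x C hC h
    rw [← ZeroAtInftyContinuousMap.norm_toBCF_eq_norm]
    exact (BoundedContinuousFunction.norm_le hC).mpr h
  have hSapp_le : ∀ (x : E) (n : ℕ), ‖Sfun x n‖ ≤ ‖Sfun x‖ := by
    intro x n
    rw [← ZeroAtInftyContinuousMap.norm_toBCF_eq_norm]
    exact BoundedContinuousFunction.norm_coe_le_norm (Sfun x).toBCF n
  let bT : ℝ := ‖(Weq.symm : E →L[ℝ] ↥(c0sub e idx))‖ + 1
  have hSb : ∀ x : E, ‖Sfun x‖ ≤ bT * ‖x‖ := by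
    intro x
    refine hSnorm_le x _ (by positivity) fun n => ?_
    rw [hSfun]
    calc ‖G (pe n) x‖ ≤ ‖P (pe n).1 x‖ := hGle (pe n) x
      _ ≤ ‖T x‖ := hPle _ x
      _ ≤ bT * ‖x‖ := hTup x
  let Slin : E →ₗ[ℝ] C₀(ℕ, ℝ) :=
    { toFun := Sfun
      map_add' := by
        intro x y
        ext n
        show G (pe n) (x + y) = G (pe n) x + G (pe n) y
        exact map_add (G (pe n)) x y
      map_smul' := by
        intro c x
        ext n
        show G (pe n) (c • x) = c • G (pe n) x
        exact map_smul (G (pe n)) c x }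
  let S : E →L[ℝ] C₀(ℕ, ℝ) := Slin.mkContinuous bT hSb
  have hSx : ∀ x : E, S x = Sfun x := fun x => rfl
  -- lower bound : ‖T x‖ ≤ 2 ‖S x‖
  have hTS : ∀ x : E, ‖T x‖ ≤ 2 * ‖Sfun x‖ := by
    intro x
    have hkey : ∀ k, ‖P k x‖ ≤ 2 * ‖Sfun x‖ := by
      intro k
      by_cases hz : P k x = 0
      · rw [hz, norm_zero]
        positivity
      · obtain ⟨g, hgL, hgz⟩ := hL2 k (P k x) (hPmem k x) hz
        obtain ⟨j, hj, hjg⟩ := List.mem_iff_getElem.mp hgL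
        have hval : Sfun x (pe.symm (k, j)) = g (P k x) := by
          rw [hSfun, Equiv.apply_symm_apply]
          rw [hGval]
          show ((L k).getD j 0) (P k x) = g (P k x)
          rw [List.getD_eq_getElem _ _ hj, hjg]
        calc ‖P k x‖ ≤ 2 * ‖g (P k x)‖ := hgz
          _ = 2 * ‖Sfun x (pe.symm (k, j))‖ := by rw [hval]
          _ ≤ 2 * ‖Sfun x‖ := by
              have := hSapp_le x (pe.symm (k, j)); linarith
    rw [hTn]
    show ‖((Weq.symm x : ↥(c0sub e idx)) : lp (fun k => blockSpace E e idx k) ∞)‖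
      ≤ 2 * ‖Sfun x‖
    refine lp.norm_le_of_forall_le ?_ fun k => ?_
    · have := norm_nonneg (Sfun x); linarith
    · exact hkey k
  refine ⟨S, (‖W‖ + 1)⁻¹ / 2, by positivity, bT, by positivity, fun x => ⟨?_, ?_⟩⟩
  · rw [hSx]
    have h1 := hTlow x
    have h2 := hTS x
    linarith
  · rw [hSx]
    exact hSb x

end Main
end

section
/- Let M be a non-degenerate Orlicz function with M(1) = 1, and let (i_k) be any strictly increasing sequence of natural numbers. Then there exist finite subsets A_1, A_2, … of ℕ with max A_j < min A_{j+1} and |A_j|·M(1/j) ≥ 1 for every j, and for such sets the formal series x = ∑_{j=1}^∞ ∑_{k∈A_j} (1/j)·e_{i_k} satisfies: every block ∑_{i_{k−1} < i ≤ i_k} slice of x has h_M-norm tending to 0, yet ∑_j |A_j|·M(1/j) = ∞, so x ∉ h_M. -/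
/-- The `h_M` (Luxemburg) norm of a sequence. -/
noncomputable def hMNorm (M : ℝ → ℝ) (a : ℕ → ℝ) : ℝ :=
  sInf {ρ : ℝ | 0 < ρ ∧ ∑' i, M (|a i| / ρ) ≤ 1}

open Filter Finset

namespace Stmt12Aux

/-- Block sizes. -/
noncomputable def NN (M : ℝ → ℝ) (j : ℕ) : ℕ := ⌈(1 : ℝ) / M (1 / (j + 1))⌉₊

/-- Cumulative block boundaries. -/
noncomputable def sF (M : ℝ → ℝ) : ℕ → ℕ
  | 0 => 0
  | j + 1 => sF M j + NN M j

/-- Index of the block containing `m`. -/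
noncomputable def blk (M : ℝ → ℝ) (m : ℕ) : ℕ :=
  Nat.findGreatest (fun j => sF M j ≤ m) m

lemma hMNorm_single (M : ℝ → ℝ) (h0 : M 0 = 0) (hM1 : M 1 = 1) (p : ℕ) (v : ℝ)
    (hv : 0 < v) :
    0 ≤ hMNorm M (fun n => if n = p then v else 0) ∧
      hMNorm M (fun n => if n = p then v else 0) ≤ v := by
  have hmem : v ∈ {ρ : ℝ | 0 < ρ ∧
      ∑' i, M (|(fun n => if n = p then v else 0) i| / ρ) ≤ 1} := by
    refine ⟨hv, ?_⟩
    have he : (fun i : ℕ => M (|(if i = p then v else 0 : ℝ)| / v))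
        = fun i : ℕ => if i = p then (1 : ℝ) else 0 := by
      funext i
      split_ifs with h
      · rw [abs_of_pos hv, div_self hv.ne', hM1]
      · simp [h0]
    simp only [he, tsum_ite_eq]
    exact le_rfl
  constructor
  · exact le_csInf ⟨v, hmem⟩ fun ρ hρ => hρ.1.le
  · exact csInf_le ⟨0, fun ρ hρ => hρ.1.le⟩ hmem

end Stmt12Aux

open Stmt12Aux

/-- For a non-degenerate Orlicz function `M` with `M 1 = 1` and any strictly increasing
`(i_k)`, there are finite sets `A_j` with `max A_j < min A_{j+1}` and
`|A_j|·M(1/j) ≥ 1`, such that `x = ∑_j ∑_{k∈A_j} (1/j)·e_{i_k}` has block `h_M`-norms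
tending to `0`, while `∑_j |A_j|·M(1/j) = ∞`, so `x ∉ h_M`.
(Here `A j` encodes `A_{j+1}`, with value `1/(j+1)` on block `A j`.) -/
theorem stmt12 (M : ℝ → ℝ)
    (hconv : ConvexOn ℝ (Set.Ici 0) M) (hmono : MonotoneOn M (Set.Ici 0))
    (h0 : M 0 = 0) (hpos : ∀ u > 0, M u > 0) (hM1 : M 1 = 1)
    (idx : ℕ → ℕ) (hidx : StrictMono idx) :
    ∃ A : ℕ → Finset ℕ,
      (∀ j, (A j).Nonempty) ∧
      (∀ j, ∀ a ∈ A j, ∀ b ∈ A (j + 1), a < b) ∧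
      (∀ j, (1 : ℝ) ≤ (A j).card * M (1 / (j + 1))) ∧
      ∃ x : ℕ → ℝ,
        (∀ j, ∀ k ∈ A j, x (idx k) = 1 / (j + 1)) ∧
        (∀ n, x n ≠ 0 → ∃ j, ∃ k ∈ A j, idx k = n) ∧
        Filter.Tendsto
          (fun k => hMNorm M (fun n => if idx k < n ∧ n ≤ idx (k + 1) then x n else 0))
          Filter.atTop (nhds 0) ∧
        ¬ Summable (fun j : ℕ => ((A j).card : ℝ) * M (1 / (j + 1))) ∧
        ¬ (∀ c > (0 : ℝ), Summable fun n => M (c * |x n|)) := by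
  classical
  -- basic positivity facts
  have hMc : ∀ j : ℕ, 0 < M (1 / (j + 1)) := by
    intro j
    exact hpos _ (by positivity)
  have hN1 : ∀ j, 1 ≤ NN M j := fun j =>
    Nat.one_le_iff_ne_zero.mpr (Nat.ceil_pos.mpr (one_div_pos.mpr (hMc j))).ne'
  have hNM : ∀ j : ℕ, (1 : ℝ) ≤ (NN M j : ℝ) * M (1 / (j + 1)) := by
    intro j
    have h1 : (1 : ℝ) / M (1 / (j + 1)) ≤ (NN M j : ℝ) := Nat.le_ceil _
    rw [div_le_iff₀ (hMc j)] at h1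
    exact h1
  -- sF facts
  have hs_strict : StrictMono (sF M) := by
    apply strictMono_nat_of_lt_succ
    intro j
    have := hN1 j
    simp only [sF]
    omega
  have hs_mono : Monotone (sF M) := hs_strict.monotone
  have hs_le : ∀ j, j ≤ sF M j := fun j => hs_strict.le_apply
  have hs0 : sF M 0 = 0 := rfl
  -- blk facts
  have hblk_eq : ∀ j m, sF M j ≤ m → m < sF M (j + 1) → blk M m = j := by
    intro j m h1 h2
    unfold blk
    rw [Nat.findGreatest_eq_iff]
    refine ⟨le_trans (hs_le j) h1, fun _ => h1, fun n hn hnm hle => ?_⟩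
    exact absurd (le_trans (hs_mono (Nat.succ_le_of_lt hn)) hle) (not_le.mpr h2)
  have hblk_lb : ∀ m, sF M (blk M m) ≤ m := by
    intro m
    exact Nat.findGreatest_spec (P := fun j => sF M j ≤ m) (Nat.zero_le m)
      (by simp [hs0])
  have hblk_ub : ∀ m, m < sF M (blk M m + 1) := by
    intro m
    by_contra h
    push_neg at h
    exact Nat.findGreatest_is_greatest (Nat.lt_succ_self _)
      (le_trans (hs_le _) h) h
  have hblk_ge : ∀ J m, sF M J ≤ m → J ≤ blk M m := by
    intro J m h
    exact Nat.le_findGreatest (le_trans (hs_le J) h) h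
  -- the sets
  set A : ℕ → Finset ℕ := fun j => Finset.Ico (sF M j) (sF M (j + 1)) with hA
  have hAcard : ∀ j, (A j).card = NN M j := by
    intro j
    simp [hA, Nat.card_Ico, sF]
  have hAmem : ∀ j k, k ∈ A j ↔ sF M j ≤ k ∧ k < sF M (j + 1) := by
    intro j k; simp [hA]
  have hblk_mem : ∀ m, m ∈ A (blk M m) := by
    intro m
    exact (hAmem _ _).mpr ⟨hblk_lb m, hblk_ub m⟩
  -- the sequence
  set x : ℕ → ℝ := fun n =>
    if h : ∃ m, idx m = n then 1 / ((blk M h.choose : ℝ) + 1) else 0 with hxdef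
  have hx_idx : ∀ m, x (idx m) = 1 / ((blk M m : ℝ) + 1) := by
    intro m
    have hex : ∃ m', idx m' = idx m := ⟨m, rfl⟩
    have hch : hex.choose = m := hidx.injective hex.choose_spec
    simp only [hxdef, dif_pos hex, hch]
  have hx_pos : ∀ m, 0 < x (idx m) := by
    intro m
    rw [hx_idx]
    positivity
  refine ⟨A, ?_, ?_, ?_, x, ?_, ?_, ?_, ?_, ?_⟩
  · -- nonempty
    intro j
    rw [hA]
    refine Finset.nonempty_Ico.mpr (hs_strict (Nat.lt_succ_self j))
  · -- ordering
    intro j a ha b hb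
    rw [hAmem] at ha hb
    exact lt_of_lt_of_le ha.2 hb.1
  · -- card bound
    intro j
    rw [hAcard]
    exact hNM j
  · -- values
    intro j k hk
    rw [hAmem] at hk
    rw [hx_idx, hblk_eq j k hk.1 hk.2]
  · -- support
    intro n hn
    rw [hxdef] at hn
    by_cases hex : ∃ m, idx m = n
    · exact ⟨blk M hex.choose, hex.choose, hblk_mem _, hex.choose_spec⟩
    · simp [dif_neg hex] at hn
  · -- block norms tend to 0
    have hblockeq : ∀ k : ℕ,
        (fun n => if idx k < n ∧ n ≤ idx (k + 1) then x n else 0)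
          = fun n => if n = idx (k + 1) then x (idx (k + 1)) else 0 := by
      intro k
      funext n
      split_ifs with h1 h2 h3
      · rw [h2]
      · -- idx k < n ≤ idx (k+1), n ≠ idx (k+1): show x n = 0
        by_contra hxn
        have : ∃ m, idx m = n := by
          rw [hxdef] at hxn
          by_contra hex
          simp [dif_neg hex] at hxn
        obtain ⟨m, hm⟩ := this
        subst hm
        have h1' := h1.1
        have h2' := h1.2
        have hk1 : k < m := hidx.lt_iff_lt.mp h1'
        have hk2 : m ≤ k + 1 := hidx.le_iff_le.mp h2'
        have : m = k + 1 := le_antisymm hk2 hk1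
        exact h2 (by rw [this])
      · subst h3
        exact absurd ⟨hidx (Nat.lt_succ_self k), le_rfl⟩ h1
      · rfl
    have hb : Filter.Tendsto (fun k => blk M (k + 1)) atTop atTop := by
      rw [tendsto_atTop_atTop]
      intro b
      exact ⟨sF M b, fun k hk => hblk_ge b (k + 1) (le_trans hk (Nat.le_succ k))⟩
    have hg : Filter.Tendsto (fun k => 1 / ((blk M (k + 1) : ℝ) + 1)) atTop (nhds 0) :=
      tendsto_one_div_add_atTop_nhds_zero_nat.comp hb
    refine squeeze_zero (fun k => ?_) (fun k => ?_) hg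
    · rw [hblockeq k]
      exact (hMNorm_single M h0 hM1 (idx (k + 1)) (x (idx (k + 1))) (hx_pos _)).1
    · rw [hblockeq k]
      simp only [hx_idx]
      exact (hMNorm_single M h0 hM1 (idx (k + 1)) _ (by positivity)).2
  · -- not summable (cards)
    intro hsum
    have ht := hsum.tendsto_atTop_zero
    have hev : ∀ᶠ j in atTop, ((A j).card : ℝ) * M (1 / (j + 1)) < 1 :=
      ht.eventually_lt_const one_pos
    obtain ⟨j, hj⟩ := hev.exists
    have : (1 : ℝ) ≤ ((A j).card : ℝ) * M (1 / (j + 1)) := by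
      rw [hAcard]; exact hNM j
    linarith
  · -- x not in h_M
    intro hAll
    have hs1 := hAll 1 one_pos
    simp only [one_mul] at hs1
    have hF : Summable (fun m => M |x (idx m)|) := hs1.comp_injective hidx.injective
    have hMnn : ∀ t : ℝ, 0 ≤ t → 0 ≤ M t := by
      intro t ht
      have := hmono (Set.mem_Ici.mpr le_rfl) (Set.mem_Ici.mpr ht) ht
      rw [h0] at this; exact this
    have hFnn : ∀ m, 0 ≤ M |x (idx m)| := fun m => hMnn _ (abs_nonneg _)
    have hFval : ∀ m, M |x (idx m)| = M (1 / ((blk M m : ℝ) + 1)) := by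
      intro m
      rw [hx_idx, abs_of_pos (by positivity)]
    have hpartial : ∀ J : ℕ, (J : ℝ) ≤ ∑ m ∈ Finset.range (sF M J), M |x (idx m)| := by
      intro J
      induction J with
      | zero => simp [sF]
      | succ J ih =>
        have hsplit : ∑ m ∈ Finset.Ico 0 (sF M J), M |x (idx m)|
              + ∑ m ∈ Finset.Ico (sF M J) (sF M (J + 1)), M |x (idx m)|
            = ∑ m ∈ Finset.Ico 0 (sF M (J + 1)), M |x (idx m)| :=
          Finset.sum_Ico_consecutive _ (Nat.zero_le _) (hs_mono (Nat.le_succ J))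
        have hconst : ∑ m ∈ Finset.Ico (sF M J) (sF M (J + 1)), M |x (idx m)|
            = (NN M J : ℝ) * M (1 / (J + 1)) := by
          have hc : ∀ m ∈ Finset.Ico (sF M J) (sF M (J + 1)),
              M |x (idx m)| = M (1 / ((J : ℝ) + 1)) := by
            intro m hm
            rw [hFval, hblk_eq J m (Finset.mem_Ico.mp hm).1 (Finset.mem_Ico.mp hm).2]
          rw [Finset.sum_congr rfl hc, Finset.sum_const, Nat.card_Ico]
          simp [sF, nsmul_eq_mul]
        have h1 : (1 : ℝ) ≤ ∑ m ∈ Finset.Ico (sF M J) (sF M (J + 1)), M |x (idx m)| := by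
          rw [hconst]; exact hNM J
        rw [Finset.range_eq_Ico, ← hsplit, ← Finset.range_eq_Ico]
        push_cast
        linarith
    have hts : ∀ J : ℕ, (J : ℝ) ≤ ∑' m, M |x (idx m)| := by
      intro J
      exact le_trans (hpartial J) (Summable.sum_le_tsum _ (fun m _ => hFnn m) hF)
    obtain ⟨J, hJ⟩ := exists_nat_gt (∑' m, M |x (idx m)|)
    exact absurd (hts J) (not_le.mpr hJ)
end

section
/- Let M be a non-degenerate Orlicz function. Then the Orlicz sequence space h_M does not embed isomorphically into c₀. -/
/-!
Suppose `T` embeds `h_M` into `c₀`. The images `T eₙ` of the unit vectors are bounded, so by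
Tychonoff a subsequence converges coordinatewise, and the differences
`uₖ = e_{φ(2k+1)} - e_{φ(2k)}` satisfy `T uₖ → 0` coordinatewise with `‖T uₖ‖` bounded.
A gliding-hump selection makes the `T u_{j m}` almost disjointly supported, so the sup norms of
their partial sums stay bounded. But `∑_{m<J} u_{j m}` has `J` coordinates equal to `1`, so its
modular at scale `ρ` is at least `J · M(1/ρ)`, and since `M(1/ρ) > 0` its `h_M` norm is unbounded
in `J`, contradicting the lower estimate for `T`.
-/

open scoped ZeroAtInfty

/-- Membership in the Orlicz sequence space `h_M`. -/
def memHM (M : ℝ → ℝ) (a : ℕ → ℝ) : Prop :=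
  ∀ c > (0 : ℝ), Summable fun i => M (c * |a i|)

open Filter Topology Finset

namespace ZeroAtInftyContinuousMap

variable {α : Type*} [TopologicalSpace α]

lemma abs_apply_le_norm (f : C₀(α, ℝ)) (x : α) : |f x| ≤ ‖f‖ := by
  simpa [Real.norm_eq_abs, norm_toBCF_eq_norm] using f.toBCF.norm_coe_le_norm x

lemma norm_le_of_forall_abs_le {f : C₀(α, ℝ)} {C : ℝ} (hC : 0 ≤ C) (h : ∀ x, |f x| ≤ C) :
    ‖f‖ ≤ C := by
  rw [← norm_toBCF_eq_norm]
  exact (BoundedContinuousFunction.norm_le hC).2 h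

lemma sum_apply {ι : Type*} (s : Finset ι) (f : ι → C₀(α, ℝ)) (x : α) :
    (∑ i ∈ s, f i) x = ∑ i ∈ s, f i x :=
  map_sum (⟨⟨fun g : C₀(α, ℝ) => g x, rfl⟩, fun _ _ => rfl⟩ : C₀(α, ℝ) →+ ℝ) f s

lemma finite_setOf_lt_abs (f : C₀(ℕ, ℝ)) {ε : ℝ} (hε : 0 < ε) : {i | ε < |f i|}.Finite := by
  have hf : Tendsto f cofinite (𝓝 0) := by
    simpa [Nat.cofinite_eq_atTop] using f.zero_at_infty'
  exact (eventually_cofinite.1 (hf.abs.eventually_lt_const (by simpa using hε))).subset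
    fun _ hi => not_lt.2 hi.le

end ZeroAtInftyContinuousMap

lemma sum_range_le_add_two {t : ℕ → ℝ} {B : ℝ} (hB : 0 ≤ B) (ht : ∀ m, t m ≤ B) {m₀ : ℕ}
    (hsmall : ∀ m ≠ m₀, t m ≤ (1 / 2) ^ m) (N : ℕ) : ∑ m ∈ range N, t m ≤ B + 2 := by
  calc ∑ m ∈ range N, t m ≤ ∑ m ∈ range N, ((if m = m₀ then B else 0) + (1 / 2) ^ m) := by
        refine sum_le_sum fun m _ => ?_
        split_ifs with h
        · linarith [ht m, pow_nonneg (by norm_num : (0 : ℝ) ≤ 1 / 2) m]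
        · simpa using hsmall m h
    _ ≤ B + 2 := by
        rw [sum_add_distrib, sum_ite_eq']
        gcongr
        · split_ifs <;> linarith
        · exact sum_geometric_two_le N

lemma exists_strictMono_abs_le_pow {v : ℕ → ℕ → ℝ}
    (hfin : ∀ k, ∀ ε > 0, {i | ε < |v k i|}.Finite)
    (hv : ∀ i, Tendsto (fun k => v k i) atTop (𝓝 0)) :
    ∃ j : ℕ → ℕ, StrictMono j ∧ ∀ i, ∃ m₀, ∀ m ≠ m₀, |v (j m) i| ≤ (1 / 2) ^ m := by
  -- `(k, p)` stands for the term `v k` with threshold `(1 / 2) ^ p`; a coordinate above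
  -- threshold for one selected term must be below threshold for every later one
  let r : ℕ × ℕ → ℕ × ℕ → Prop := fun x y => x.1 < y.1 ∧ x.2 < y.2 ∧
    ∀ i, (1 / 2 : ℝ) ^ x.2 < |v x.1 i| → |v y.1 i| ≤ (1 / 2) ^ y.2
  have hstep (s : Finset (ℕ × ℕ)) : ∃ y, ∀ x ∈ s, r x y := by
    set p := s.sup Prod.snd + 1
    have hsmall : ∀ᶠ k in atTop, ∀ x ∈ s,
        ∀ i ∈ {i | (1 / 2 : ℝ) ^ x.2 < |v x.1 i|}, |v k i| ≤ (1 / 2) ^ p := by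
      refine (eventually_all_finset s).2 fun x _ =>
        (eventually_all_finite (hfin _ _ (by positivity))).2 fun i _ => ?_
      exact ((hv i).abs.eventually_lt_const (by simp)).mono fun _ h => h.le
    obtain ⟨k, hk, hks⟩ := ((eventually_gt_atTop (s.sup Prod.fst)).and hsmall).exists
    exact ⟨(k, p), fun x hx =>
      ⟨(le_sup hx).trans_lt hk, Nat.lt_succ_of_le (le_sup hx), hks x hx⟩⟩
  obtain ⟨f, -, hf⟩ := exists_seq_of_forall_finset_exists (fun _ => True) r
    fun s _ => (hstep s).imp fun _ hy => ⟨trivial, hy⟩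
  have hp : StrictMono fun m => (f m).2 := fun m n h => (hf m n h).2.1
  refine ⟨fun m => (f m).1, fun m n h => (hf m n h).1, fun i => ?_⟩
  suffices ∃ m₀, ∀ m ≠ m₀, |v (f m).1 i| ≤ (1 / 2) ^ (f m).2 from
    this.imp fun m₀ h m hm =>
      (h m hm).trans (pow_le_pow_of_le_one (by norm_num) (by norm_num) (hp.id_le m))
  by_cases hbig : ∃ m₀, (1 / 2 : ℝ) ^ (f m₀).2 < |v (f m₀).1 i|
  · obtain ⟨m₀, hm₀⟩ := hbig
    refine ⟨m₀, fun m hm => ?_⟩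
    rcases hm.lt_or_gt with hlt | hgt
    · exact le_of_not_gt fun h => ((hf m m₀ hlt).2.2 i h).not_gt hm₀
    · exact (hf m₀ m hgt).2.2 i hm₀
  · push Not at hbig
    exact ⟨0, fun m _ => hbig m⟩

lemma exists_strictMono_norm_sum_le {v : ℕ → C₀(ℕ, ℝ)} {B : ℝ} (hB : ∀ k, ‖v k‖ ≤ B)
    (hv : ∀ i, Tendsto (fun k => v k i) atTop (𝓝 0)) :
    ∃ j : ℕ → ℕ, StrictMono j ∧ ∀ N, ‖∑ m ∈ range N, v (j m)‖ ≤ B + 2 := by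
  have hB0 : 0 ≤ B := (norm_nonneg _).trans (hB 0)
  obtain ⟨j, hj, hsmall⟩ := exists_strictMono_abs_le_pow (v := fun k i => v k i)
    (fun k _ hε => (v k).finite_setOf_lt_abs hε) hv
  refine ⟨j, hj, fun N => ZeroAtInftyContinuousMap.norm_le_of_forall_abs_le (by linarith)
    fun i => ?_⟩
  obtain ⟨m₀, hm₀⟩ := hsmall i
  calc |(∑ m ∈ range N, v (j m)) i| = |∑ m ∈ range N, v (j m) i| := by
        rw [ZeroAtInftyContinuousMap.sum_apply]
    _ ≤ ∑ m ∈ range N, |v (j m) i| := abs_sum_le_sum_abs _ _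
    _ ≤ B + 2 := sum_range_le_add_two hB0
        (fun m => ((v (j m)).abs_apply_le_norm i).trans (hB _)) hm₀ N

lemma exists_strictMono_tendsto_sub {w : ℕ → ℕ → ℝ} {B : ℝ} (hw : ∀ n i, |w n i| ≤ B) :
    ∃ φ : ℕ → ℕ, StrictMono φ ∧
      ∀ i, Tendsto (fun k => w (φ (2 * k + 1)) i - w (φ (2 * k)) i) atTop (𝓝 0) := by
  have hK : IsCompact (Set.univ.pi fun _ : ℕ => Set.Icc (-B) B) :=
    isCompact_univ_pi fun _ => isCompact_Icc
  obtain ⟨c, -, φ, hφ, hc⟩ := hK.tendsto_subseq (x := w) fun n i _ => abs_le.1 (hw n i)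
  refine ⟨φ, hφ, fun i => ?_⟩
  have hi := tendsto_pi_nhds.1 hc i
  have hodd : Tendsto (fun k : ℕ => 2 * k + 1) atTop atTop :=
    tendsto_atTop_mono (fun k => show k ≤ 2 * k + 1 by omega) tendsto_id
  have heven : Tendsto (fun k : ℕ => 2 * k) atTop atTop :=
    tendsto_atTop_mono (fun k => show k ≤ 2 * k by omega) tendsto_id
  simpa using (hi.comp hodd).sub (hi.comp heven)

section Orlicz

variable {M : ℝ → ℝ}

lemma MonotoneOn.nonneg_of_map_zero (hmono : MonotoneOn M (Set.Ici 0)) (h0 : M 0 = 0)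
    {t : ℝ} (ht : 0 ≤ t) : 0 ≤ M t :=
  h0 ▸ hmono Set.self_mem_Ici ht ht

lemma ConvexOn.map_mul_le_of_map_zero (hconv : ConvexOn ℝ (Set.Ici 0) M) (h0 : M 0 = 0)
    {c t : ℝ} (hc0 : 0 ≤ c) (hc1 : c ≤ 1) (ht : 0 ≤ t) : M (c * t) ≤ c * M t := by
  have h := hconv.2 (Set.self_mem_Ici) (Set.mem_Ici.2 ht) (sub_nonneg.2 hc1) hc0 (by ring)
  simpa [h0] using h

lemma memHM_finsupp (h0 : M 0 = 0) (f : ℕ →₀ ℝ) : memHM M f := fun c _ =>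
  summable_of_ne_finset_zero (s := f.support) fun i hi => by
    simp [Finsupp.notMem_support_iff.1 hi, h0]

lemma memHM.summable_div {x : ℕ → ℝ} (hx : memHM M x) {ρ : ℝ} (hρ : 0 < ρ) :
    Summable fun i => M (|x i| / ρ) := by
  simpa only [div_eq_inv_mul] using hx ρ⁻¹ (inv_pos.2 hρ)

lemma memHM.exists_tsum_le_one (hconv : ConvexOn ℝ (Set.Ici 0) M)
    (hmono : MonotoneOn M (Set.Ici 0)) (h0 : M 0 = 0) {x : ℕ → ℝ} (hx : memHM M x) :
    ∃ ρ > 0, ∑' i, M (|x i| / ρ) ≤ 1 := by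
  have hM : ∀ i, 0 ≤ M |x i| := fun i => hmono.nonneg_of_map_zero h0 (abs_nonneg _)
  set S := ∑' i, M |x i|
  have hS : 0 ≤ S := tsum_nonneg hM
  have hρ : 0 < S + 1 := by linarith
  refine ⟨S + 1, hρ, ?_⟩
  have hsum : Summable fun i => M |x i| := by simpa using hx 1 one_pos
  calc ∑' i, M (|x i| / (S + 1)) ≤ ∑' i, (S + 1)⁻¹ * M |x i| := by
        refine (hx.summable_div hρ).tsum_le_tsum (fun i => ?_) (hsum.mul_left _)
        rw [div_eq_inv_mul]
        exact hconv.map_mul_le_of_map_zero h0 (by positivity)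
          (inv_le_one_of_one_le₀ (by linarith)) (abs_nonneg _)
    _ = S / (S + 1) := by rw [tsum_mul_left, inv_mul_eq_div]
    _ ≤ 1 := (div_le_one hρ).2 (by linarith)

lemma le_hMNorm (hconv : ConvexOn ℝ (Set.Ici 0) M) (hmono : MonotoneOn M (Set.Ici 0))
    (h0 : M 0 = 0) {x : ℕ → ℝ} (hx : memHM M x) {ρ : ℝ} (hρ : 0 < ρ)
    (h : 1 < ∑' i, M (|x i| / ρ)) : ρ ≤ hMNorm M x := by
  obtain ⟨ρ₀, hρ₀, hρ₀le⟩ := hx.exists_tsum_le_one hconv hmono h0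
  refine le_csInf ⟨ρ₀, hρ₀, hρ₀le⟩ fun ρ' ⟨hρ', hρ'le⟩ => le_of_not_gt fun hlt => ?_
  have hle : ∑' i, M (|x i| / ρ) ≤ ∑' i, M (|x i| / ρ') :=
    (hx.summable_div hρ).tsum_le_tsum (fun i =>
      hmono (Set.mem_Ici.2 (by positivity)) (Set.mem_Ici.2 (by positivity))
        (div_le_div_of_nonneg_left (abs_nonneg _) hρ' hlt.le)) (hx.summable_div hρ')
  linarith

lemma hMNorm_single (h0 : M 0 = 0) (n : ℕ) (t : ℝ) :
    hMNorm M (Finsupp.single n t) = hMNorm M (Finsupp.single 0 t) := by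
  have key (m : ℕ) (ρ : ℝ) : ∑' i, M (|Finsupp.single m t i| / ρ) = M (|t| / ρ) := by
    rw [tsum_eq_single m fun i hi => by simp [Ne.symm hi, h0]]
    simp
  simp only [hMNorm, key]

lemma exists_le_hMNorm_sum_single_sub_single (hconv : ConvexOn ℝ (Set.Ici 0) M)
    (hmono : MonotoneOn M (Set.Ici 0)) (h0 : M 0 = 0) (hpos : ∀ u > 0, M u > 0)
    {p q : ℕ → ℕ} (hp : p.Injective) (hpq : ∀ m m', p m ≠ q m') {ρ : ℝ} (hρ : 0 < ρ) :
    ∃ J : ℕ, ρ ≤ hMNorm M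
      (∑ m ∈ range J, (Finsupp.single (p m) 1 - Finsupp.single (q m) 1) : ℕ →₀ ℝ) := by
  obtain ⟨J, hJ⟩ := exists_nat_gt (M (1 / ρ))⁻¹
  have hJ : 1 < J * M (1 / ρ) := by
    rwa [inv_lt_iff_one_lt_mul₀ (hpos _ (by positivity))] at hJ
  set S : ℕ →₀ ℝ := ∑ m ∈ range J, (Finsupp.single (p m) 1 - Finsupp.single (q m) 1)
  have hS : ∀ m ∈ range J, S (p m) = 1 := fun m hm => by
    simp [S, Finsupp.single_apply, hp.eq_iff, hpq, hm]
  refine ⟨J, le_hMNorm hconv hmono h0 (memHM_finsupp h0 S) hρ ?_⟩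
  calc 1 < J * M (1 / ρ) := hJ
    _ = ∑ i ∈ (range J).image p, M (|S i| / ρ) := by
        rw [sum_image hp.injOn, sum_congr rfl fun m hm => by rw [hS m hm, abs_one]]
        simp
    _ ≤ ∑' i, M (|S i| / ρ) :=
        ((memHM_finsupp h0 S).summable_div hρ).sum_le_tsum _
          fun i _ => hmono.nonneg_of_map_zero h0 (by positivity)

lemma exists_norm_le_and_le_hMNorm (hconv : ConvexOn ℝ (Set.Ici 0) M)
    (hmono : MonotoneOn M (Set.Ici 0)) (h0 : M 0 = 0) (hpos : ∀ u > 0, M u > 0)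
    {L : (ℕ →₀ ℝ) →ₗ[ℝ] C₀(ℕ, ℝ)} {B : ℝ} (hL : ∀ n, ‖L (Finsupp.single n 1)‖ ≤ B)
    {ρ : ℝ} (hρ : 0 < ρ) : ∃ f : ℕ →₀ ℝ, ‖L f‖ ≤ 2 * B + 2 ∧ ρ ≤ hMNorm M f := by
  obtain ⟨φ, hφ, hlim⟩ :=
    exists_strictMono_tendsto_sub (w := fun n i => L (Finsupp.single n 1) i)
      fun n i => ((L _).abs_apply_le_norm i).trans (hL n)
  let u (k : ℕ) : ℕ →₀ ℝ := Finsupp.single (φ (2 * k + 1)) 1 - Finsupp.single (φ (2 * k)) 1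
  have hu (k : ℕ) : ‖L (u k)‖ ≤ 2 * B := by
    rw [map_sub]
    exact (norm_sub_le _ _).trans ((add_le_add (hL _) (hL _)).trans_eq (two_mul B).symm)
  obtain ⟨j, hj, hsum⟩ := exists_strictMono_norm_sum_le hu fun i => by
    simpa [u, map_sub] using hlim i
  obtain ⟨J, hJ⟩ := exists_le_hMNorm_sum_single_sub_single hconv hmono h0 hpos
    (p := fun m => φ (2 * j m + 1)) (q := fun m => φ (2 * j m))
    (fun m m' h => hj.injective (by have := hφ.injective h; omega))
    (fun m m' h => by have := hφ.injective h; omega) hρ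
  refine ⟨∑ m ∈ range J, u (j m), ?_, hJ⟩
  rw [map_sum]
  exact hsum J

end Orlicz

/-- For a non-degenerate Orlicz function `M`, the space `h_M` does not embed
isomorphically into `c₀`: there is no map `T` from `h_M` to `c₀`, linear on `h_M`,
with `a·‖x‖_{h_M} ≤ ‖T x‖ ≤ b·‖x‖_{h_M}`. -/
theorem stmt13 (M : ℝ → ℝ)
    (hconv : ConvexOn ℝ (Set.Ici 0) M) (hmono : MonotoneOn M (Set.Ici 0))
    (h0 : M 0 = 0) (hpos : ∀ u > 0, M u > 0) :
    ¬ ∃ (T : (ℕ → ℝ) → C₀(ℕ, ℝ)) (a b : ℝ), 0 < a ∧ 0 < b ∧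
        (∀ x y : ℕ → ℝ, memHM M x → memHM M y → T (x + y) = T x + T y) ∧
        (∀ (c : ℝ) (x : ℕ → ℝ), memHM M x → T (c • x) = c • T x) ∧
        (∀ x : ℕ → ℝ, memHM M x →
          a * hMNorm M x ≤ ‖T x‖ ∧ ‖T x‖ ≤ b * hMNorm M x) := by
  rintro ⟨T, a, b, ha, -, hadd, hsmul, hbd⟩
  have hmem := memHM_finsupp h0
  let L : (ℕ →₀ ℝ) →ₗ[ℝ] C₀(ℕ, ℝ) :=
    { toFun f := T f
      map_add' f g := hadd f g (hmem f) (hmem g)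
      map_smul' c f := hsmul c f (hmem f) }
  set B := b * hMNorm M (Finsupp.single 0 1)
  have hL (n : ℕ) : ‖L (Finsupp.single n 1)‖ ≤ B :=
    (hbd _ (hmem _)).2.trans_eq (by rw [hMNorm_single h0 n])
  have hB : 0 ≤ B := (norm_nonneg _).trans (hL 0)
  obtain ⟨f, hLf, hf⟩ := exists_norm_le_and_le_hMNorm hconv hmono h0 hpos hL
    (ρ := (2 * B + 3) / a) (by positivity)
  have key : 2 * B + 3 ≤ ‖T f‖ := by
    simpa only [mul_div_cancel₀ _ ha.ne'] using
      (mul_le_mul_of_nonneg_left hf ha.le).trans (hbd f (hmem f)).1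
  exact (key.trans hLf).not_gt (by linarith)
end

section
/- For every infinite ordinal α < ω^ω, the Banach space C(α) of continuous real functions on the ordinal interval [0, α] (with the order topology) is isomorphic to c₀. -/
/-
Arrange the points of `[0, α]` into a rooted tree with root `α`: the parent of `β < α` is
`min α (β + ω ^ (k + 1))`, the least multiple of `ω ^ (k + 1)` above `β` (capped at `α`), where
`ω ^ k` is the largest power of `ω` dividing `β`. The exponent `k` increases along every branch,
so when `α < ω ^ (n + 1)` every branch reaches `α` within `n + 1` steps; and the points just
below a limit `γ` climb to `γ` without leaving a small neighbourhood of `γ`.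

For a finite-height tree of this kind on a compact space, `f ↦ (f(root), f(y) - f(parent y))` is
an isomorphism onto `c₀` of the points, with inverse given by summing increments along branches:
continuity of `f` makes the increments tend to zero, and conversely the branch sums of a
`c₀`-family are continuous. Since `ω ≤ α < ω ^ ω`, the space `[0, α]` is countably infinite, so
that `c₀` is `c₀(ℕ)`.
-/

open Set Filter Topology Function
open scoped ZeroAtInfty BoundedContinuousFunction

theorem Function.exists_iterate_eq_of_mapsTo_diff {X : Type*} {f : X → X} {s : Set X} {a b : X}
    (hf : MapsTo f (s \ {a}) s) (hb : b ∈ s) (hleave : ∃ k, f^[k] b ∉ s \ {a}) :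
    ∃ j, f^[j] b = a ∧ ∀ i ≤ j, f^[i] b ∈ s := by
  classical
  have hbefore : ∀ i < Nat.find hleave, f^[i] b ∈ s \ {a} := fun i hi =>
    not_not.1 (Nat.find_min hleave hi)
  have hmem : f^[Nat.find hleave] b ∈ s := by
    rcases h : Nat.find hleave with _ | i
    · exact hb
    · rw [iterate_succ_apply']
      exact hf (hbefore i (by omega))
  refine ⟨Nat.find hleave, by_contra fun hne => Nat.find_spec hleave ⟨hmem, hne⟩, fun i hi => ?_⟩
  rcases hi.lt_or_eq with hi | rfl
  · exact (hbefore i hi).1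
  · exact hmem

namespace ZeroAtInftyContinuousMap

variable {ι E : Type*} [TopologicalSpace ι] [SeminormedAddCommGroup E]

theorem norm_le_of_forall_le {f : C₀(ι, E)} {C : ℝ} (hC : 0 ≤ C) (h : ∀ i, ‖f i‖ ≤ C) :
    ‖f‖ ≤ C := by
  rw [← norm_toBCF_eq_norm]
  exact (BoundedContinuousFunction.norm_le hC).2 h

theorem norm_apply_le (f : C₀(ι, E)) (i : ι) : ‖f i‖ ≤ ‖f‖ := by
  rw [← norm_toBCF_eq_norm]
  exact f.toBCF.norm_coe_le_norm i

end ZeroAtInftyContinuousMap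

theorem tendsto_cocompact_nhds_zero_iff_finite {ι E : Type*} [SeminormedAddCommGroup E]
    [TopologicalSpace ι] [DiscreteTopology ι] {f : ι → E} :
    Tendsto f (cocompact ι) (𝓝 0) ↔ ∀ ε > 0, {i | ε ≤ ‖f i‖}.Finite := by
  simp only [cocompact_eq_cofinite, Metric.tendsto_nhds, eventually_cofinite, dist_zero_right,
    not_lt]

structure CompatibleTree (X : Type*) [TopologicalSpace X] where
  parent : X → X
  root : X
  height : ℕ
  parent_iterate_height : ∀ x, parent^[height] x = root
  eventually_iterate_eq :
    ∀ x, ∀ V ∈ 𝓝 x, ∀ᶠ y in 𝓝 x, ∃ j, parent^[j] y = x ∧ ∀ i ≤ j, parent^[i] y ∈ V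

namespace CompatibleTree

open Finset

variable {X E : Type*} [TopologicalSpace X] [SeminormedAddCommGroup E] (t : CompatibleTree X)

theorem parent_root : t.parent t.root = t.root := by
  conv_lhs => rw [← t.parent_iterate_height t.root, ← iterate_succ_apply' t.parent,
    iterate_succ_apply, t.parent_iterate_height]

theorem parent_iterate_root (k : ℕ) : t.parent^[k] t.root = t.root :=
  iterate_fixed t.parent_root k

theorem parent_iterate_of_le {k : ℕ} (hk : t.height ≤ k) (x : X) : t.parent^[k] x = t.root := by
  obtain ⟨m, rfl⟩ := Nat.exists_eq_add_of_le' hk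
  rw [iterate_add_apply, t.parent_iterate_height, parent_iterate_root]

theorem eventually_exists_first_iterate_eq (x : X) {V : Set X} (hV : V ∈ 𝓝 x) :
    ∀ᶠ y in 𝓝 x, ∃ j ≤ t.height, t.parent^[j] y = x ∧ ∀ i < j, t.parent^[i] y ∈ V \ {x} := by
  classical
  filter_upwards [t.eventually_iterate_eq x V hV] with y ⟨j, hj, hjV⟩
  have hex : ∃ k, t.parent^[k] y = x := ⟨j, hj⟩
  refine ⟨Nat.find hex, ?_, Nat.find_spec hex, fun i hi =>
    ⟨hjV i (hi.le.trans (Nat.find_min' hex hj)), Nat.find_min hex hi⟩⟩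
  by_contra! hlt
  refine Nat.find_min hex hlt ?_
  rw [t.parent_iterate_height, ← t.parent_iterate_of_le hlt.le y, Nat.find_spec hex]

theorem finite_setOf_le_dist_parent [CompactSpace X] {Y : Type*} [PseudoMetricSpace Y]
    {f : X → Y} (hf : Continuous f) {ε : ℝ} (hε : 0 < ε) :
    {y | ε ≤ dist (f y) (f (t.parent y))}.Finite := by
  -- Near `x`, both `y` and `parent y` lie in the `ε / 2`-ball around `f x` unless `y = x`;
  -- finitely many such neighbourhoods cover `X`.
  have hU : ∀ x, {y | ∃ j, t.parent^[j] y = x ∧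
      ∀ i ≤ j, t.parent^[i] y ∈ f ⁻¹' Metric.ball (f x) (ε / 2)} ∈ 𝓝 x := fun x =>
    t.eventually_iterate_eq x _
      (hf.continuousAt.preimage_mem_nhds (Metric.ball_mem_nhds _ (by positivity)))
  obtain ⟨s, hs⟩ := finite_cover_nhds hU
  refine s.finite_toSet.subset fun y hy => ?_
  obtain ⟨x, hx, j, hj, hball⟩ := mem_iUnion₂.1 (hs.symm ▸ mem_univ y)
  rcases j with _ | j
  · obtain rfl : y = x := hj
    exact hx
  · have h0 := hball 0 (Nat.zero_le _)
    have h1 := hball 1 (by omega)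
    simp only [iterate_zero_apply, iterate_one, Set.mem_preimage, Metric.mem_ball] at h0 h1
    linarith [show ε ≤ dist (f y) (f (t.parent y)) from hy,
      dist_triangle_right (f y) (f (t.parent y)) (f x)]

section BranchSum

variable {g : X → E}

theorem sum_parent_iterate_eq_add (hg : g t.root = 0) {x y : X} {j : ℕ}
    (hj : t.parent^[j] y = x) :
    ∑ k ∈ range t.height, g (t.parent^[k] y) =
      ∑ k ∈ range j, g (t.parent^[k] y) + ∑ k ∈ range t.height, g (t.parent^[k] x) := by
  have htail : ∀ z m, ∑ k ∈ range (t.height + m), g (t.parent^[k] z) =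
      ∑ k ∈ range t.height, g (t.parent^[k] z) := fun z m => by
    rw [sum_range_add, add_eq_left]
    exact sum_eq_zero fun k _ => by rw [t.parent_iterate_of_le (Nat.le_add_right _ _), hg]
  rw [← htail y j, add_comm, sum_range_add]
  exact congrArg _ (sum_congr rfl fun k _ => by rw [add_comm, iterate_add_apply, hj])

theorem continuous_sum_parent_iterate [T1Space X] (hg : g t.root = 0)
    (hfin : ∀ ε > 0, {y | ε ≤ ‖g y‖}.Finite) :
    Continuous fun y => ∑ k ∈ range t.height, g (t.parent^[k] y) := by
  -- Near `x`, the branch from `y` to `x` avoids the finitely many points where `δ ≤ ‖g‖`.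
  refine continuous_iff_continuousAt.2 fun x => Metric.tendsto_nhds.2 fun ε hε => ?_
  set δ := ε / (t.height + 1)
  have hδ : 0 < δ := by positivity
  have hV : ({y | δ ≤ ‖g y‖} \ {x})ᶜ ∈ 𝓝 x :=
    ((hfin δ hδ).sdiff).isClosed.compl_mem_nhds fun h => h.2 rfl
  filter_upwards [t.eventually_exists_first_iterate_eq x hV] with y ⟨j, hjh, hj, hsmall⟩
  have hbranch : ∀ k ∈ range j, ‖g (t.parent^[k] y)‖ ≤ δ := fun k hk => by
    obtain ⟨hk, hkx⟩ := hsmall k (mem_range.1 hk)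
    exact (not_le.1 fun h => hk ⟨h, hkx⟩).le
  rw [dist_eq_norm, t.sum_parent_iterate_eq_add hg hj, add_sub_cancel_right]
  calc ‖∑ k ∈ range j, g (t.parent^[k] y)‖ ≤ ∑ k ∈ range j, ‖g (t.parent^[k] y)‖ :=
        norm_sum_le _ _
    _ ≤ j * δ := by simpa using sum_le_sum hbranch
    _ < (t.height + 1) * δ := by gcongr; exact_mod_cast Nat.lt_succ_of_le hjh
    _ = ε := mul_div_cancel₀ _ (by positivity)

end BranchSum

section Increment

variable [DecidableEq X]

-- At the root, where `parent root = root`, the coordinate records `f root` instead of `0`.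
def increment (f : X → E) : X → E :=
  update (fun y => f y - f (t.parent y)) t.root (f t.root)

def accumulate (g : X → E) : X → E :=
  fun y => g t.root + ∑ k ∈ range t.height, update g t.root 0 (t.parent^[k] y)

theorem update_increment_root (f : X → E) :
    update (t.increment f) t.root 0 = fun y => f y - f (t.parent y) := by
  rw [increment, update_idem, update_eq_self_iff, t.parent_root, sub_self]

theorem accumulate_increment (f : X → E) : t.accumulate (t.increment f) = f := by
  ext y
  simp only [accumulate, update_increment_root, ← iterate_succ_apply' t.parent]
  rw [sum_range_sub' (fun k => f (t.parent^[k] y)), iterate_zero_apply, t.parent_iterate_height,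
    increment, update_self, add_sub_cancel]

theorem increment_accumulate (g : X → E) : t.increment (t.accumulate g) = g := by
  ext y
  rcases eq_or_ne y t.root with rfl | hy
  · simp [increment, accumulate, parent_iterate_root]
  · rw [increment, update_of_ne hy]
    simp only [accumulate, add_sub_add_left_eq_sub, ← sum_sub_distrib, ← iterate_succ_apply,
      sum_range_sub', iterate_zero_apply, t.parent_iterate_height, update_self, update_of_ne hy,
      sub_zero]

theorem increment_add (f₁ f₂ : X → E) :
    t.increment (f₁ + f₂) = t.increment f₁ + t.increment f₂ := by
  ext y
  simp only [increment, update_apply, Pi.add_apply]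
  split_ifs <;> abel

theorem increment_smul {𝕜 : Type*} [NormedField 𝕜] [NormedSpace 𝕜 E] (c : 𝕜) (f : X → E) :
    t.increment (c • f) = c • t.increment f := by
  ext y
  simp only [increment, update_apply, Pi.smul_apply]
  split_ifs <;> simp [smul_sub]

theorem norm_increment_le {f : X → E} {C : ℝ} (hf : ∀ y, ‖f y‖ ≤ C) (y : X) :
    ‖t.increment f y‖ ≤ 2 * C := by
  rcases eq_or_ne y t.root with rfl | hy
  · rw [increment, update_self]
    linarith [hf t.root, norm_nonneg (f t.root)]
  · rw [increment, update_of_ne hy]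
    linarith [norm_sub_le (f y) (f (t.parent y)), hf y, hf (t.parent y)]

theorem norm_accumulate_le {g : X → E} {C : ℝ} (hg : ∀ y, ‖g y‖ ≤ C) (y : X) :
    ‖t.accumulate g y‖ ≤ (t.height + 1) * C := by
  have hupdate : ∀ z, ‖update g t.root 0 z‖ ≤ C := fun z => by
    rw [update_apply]
    split_ifs
    · exact norm_zero.trans_le ((norm_nonneg _).trans (hg z))
    · exact hg z
  calc ‖t.accumulate g y‖
        ≤ ‖g t.root‖ + ∑ k ∈ range t.height, ‖update g t.root 0 (t.parent^[k] y)‖ :=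
        (norm_add_le _ _).trans (by gcongr; exact norm_sum_le _ _)
    _ ≤ C + ∑ k ∈ range t.height, C := add_le_add (hg _) (sum_le_sum fun k _ => hupdate _)
    _ = (t.height + 1) * C := by rw [sum_const, card_range, nsmul_eq_mul]; ring

theorem finite_setOf_le_norm_increment [CompactSpace X] {f : X → E} (hf : Continuous f) {ε : ℝ}
    (hε : 0 < ε) : {y | ε ≤ ‖t.increment f y‖}.Finite := by
  refine ((t.finite_setOf_le_dist_parent hf hε).insert t.root).subset fun y hy => ?_
  rcases eq_or_ne y t.root with rfl | hne
  · exact mem_insert _ _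
  · rw [mem_ofPred_eq, increment, update_of_ne hne, ← dist_eq_norm] at hy
    exact mem_insert_of_mem _ hy

theorem continuous_accumulate [T1Space X] {g : X → E}
    (hfin : ∀ ε > 0, {y | ε ≤ ‖g y‖}.Finite) :
    Continuous (t.accumulate g) := by
  refine continuous_const.add (t.continuous_sum_parent_iterate (update_self _ _ _) fun ε hε =>
    (hfin ε hε).subset fun y hy => ?_)
  rcases eq_or_ne y t.root with rfl | hne
  · rw [mem_ofPred_eq, update_self, norm_zero] at hy
    exact absurd hy (not_le.2 hε)
  · rwa [mem_ofPred_eq, update_of_ne hne] at hy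

section Banach

variable {𝕜 ι : Type*} [NormedField 𝕜] [NormedSpace 𝕜 E] [TopologicalSpace ι]
  [DiscreteTopology ι] (e : ι ≃ X)

def incrementLinearMap [CompactSpace X] : (X →ᵇ E) →ₗ[𝕜] C₀(ι, E) where
  toFun f := ⟨⟨t.increment f ∘ e, continuous_of_discreteTopology⟩,
    tendsto_cocompact_nhds_zero_iff_finite.2 fun _ hε =>
      show (e ⁻¹' _).Finite from
        (t.finite_setOf_le_norm_increment f.continuous hε).preimage e.injective.injOn⟩
  map_add' f₁ f₂ := by ext i; exact congrFun (t.increment_add f₁ f₂) (e i)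
  map_smul' c f := by ext i; exact congrFun (t.increment_smul c f) (e i)

theorem incrementLinearMap_apply [CompactSpace X] (f : X →ᵇ E) (i : ι) :
    t.incrementLinearMap (𝕜 := 𝕜) e f i = t.increment f (e i) := rfl

noncomputable def accumulateBCF [T1Space X] (g : C₀(ι, E)) : X →ᵇ E :=
  BoundedContinuousFunction.ofNormedAddCommGroup (t.accumulate (g ∘ e.symm))
    (t.continuous_accumulate fun _ hε => show (e.symm ⁻¹' _).Finite from
      (tendsto_cocompact_nhds_zero_iff_finite.1 g.zero_at_infty' _ hε).preimage
        e.symm.injective.injOn)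
    ((t.height + 1) * ‖g‖) (t.norm_accumulate_le fun _ => g.norm_apply_le _)

noncomputable def incrementEquiv [CompactSpace X] [T1Space X] : (X →ᵇ E) ≃L[𝕜] C₀(ι, E) :=
  LinearEquiv.toContinuousLinearEquivOfBounds
    { t.incrementLinearMap e with
      invFun := t.accumulateBCF e
      left_inv := fun f => by
        ext y
        show t.accumulate (t.incrementLinearMap (𝕜 := 𝕜) e f ∘ e.symm) y = f y
        simp [Function.comp_def, incrementLinearMap_apply, accumulate_increment]
      right_inv := fun g => by
        ext i
        show t.increment (t.accumulate (g ∘ e.symm)) (e i) = g i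
        simp [increment_accumulate] }
    2 (t.height + 1)
    (fun f => ZeroAtInftyContinuousMap.norm_le_of_forall_le (by positivity) fun _ =>
      t.norm_increment_le f.norm_coe_le_norm _)
    (fun g => BoundedContinuousFunction.norm_ofNormedAddCommGroup_le _ (by positivity)
      (t.norm_accumulate_le fun _ => g.norm_apply_le _))

end Banach

end Increment

end CompatibleTree

namespace Ordinal

open Order

variable {α β γ : Ordinal}

theorem omega0_pow_lt_omega0_opow_omega0 (n : ℕ) : ω ^ n < ω ^ ω := by
  rw [← opow_natCast]
  exact (opow_lt_opow_iff_right one_lt_omega0).2 (natCast_lt_omega0 n)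

theorem exists_lt_omega0_pow_succ (hα : α < ω ^ ω) : ∃ n : ℕ, α < ω ^ (n + 1) := by
  obtain ⟨c, hc, hαc⟩ := (lt_opow_of_isSuccLimit omega0_ne_zero isSuccLimit_omega0).1 hα
  obtain ⟨n, rfl⟩ := lt_omega0.1 hc
  refine ⟨n, hαc.trans_le ?_⟩
  rw [opow_natCast, pow_succ]
  exact le_mul_left _ omega0_pos

theorem finiteMultiplicity_omega0 (h0 : β ≠ 0) (hβ : β < ω ^ ω) :
    FiniteMultiplicity ω β := by
  obtain ⟨n, hn⟩ := exists_lt_omega0_pow_succ hβ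
  exact ⟨n, fun hd => (le_of_dvd h0 hd).not_gt hn⟩

theorem add_omega0_pow (β : Ordinal) (m : ℕ) : β + ω ^ m = ω ^ m * (β / ω ^ m + 1) := by
  have h0 : ω ^ m ≠ 0 := pow_ne_zero _ omega0_ne_zero
  have hprin : β % ω ^ m + ω ^ m = ω ^ m := by
    have := mod_lt β h0
    rw [← opow_natCast] at this ⊢
    exact add_of_omega0_opow_le this le_rfl
  calc β + ω ^ m = ω ^ m * (β / ω ^ m) + (β % ω ^ m + ω ^ m) := by rw [← add_assoc, div_add_mod]
    _ = ω ^ m * (β / ω ^ m + 1) := by rw [hprin, mul_add_one]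

theorem omega0_pow_dvd_add (β : Ordinal) (m : ℕ) : ω ^ m ∣ β + ω ^ m :=
  ⟨_, add_omega0_pow β m⟩

theorem add_omega0_pow_le {m : ℕ} (hlt : β < γ) (hd : ω ^ m ∣ γ) :
    β + ω ^ m ≤ γ := by
  obtain ⟨q, rfl⟩ := hd
  rw [add_omega0_pow]
  exact mul_le_mul_right
    (add_one_le_of_lt ((lt_mul_iff_div_lt (pow_ne_zero _ omega0_ne_zero)).1 hlt)) _

theorem exists_lt_forall_multiplicity_lt (h0 : γ ≠ 0) (hγ : γ < ω ^ ω) :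
    ∃ x < γ, ∀ β ∈ Ioo x γ, multiplicity ω β < multiplicity ω γ := by
  -- `γ = ω ^ r * q` with `q` a successor, as `ω ^ (r + 1) ∤ γ`; take `x = ω ^ r * (q - 1)`.
  set r := multiplicity ω γ
  obtain ⟨q, hq⟩ := pow_multiplicity_dvd ω γ
  obtain ⟨q₀, hq₀⟩ : ∃ q₀, q₀ ⋖ q := not_isSuccPrelimit_iff.1 fun hlim => by
    obtain ⟨q', rfl⟩ := isSuccPrelimit_iff_omega0_dvd.1 hlim
    refine (finiteMultiplicity_omega0 h0 hγ).not_pow_dvd_of_multiplicity_lt (lt_add_one r) ⟨q', ?_⟩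
    rw [hq, pow_succ, mul_assoc]
  have hpos : 0 < ω ^ r := pow_pos omega0_pos r
  refine ⟨ω ^ r * q₀, by rw [hq]; exact (mul_lt_mul_iff_right₀ hpos).2 hq₀.lt, ?_⟩
  rintro β ⟨hxβ, hβγ⟩
  by_contra! hle
  obtain ⟨p, rfl⟩ := (pow_dvd_pow ω hle).trans (pow_multiplicity_dvd ω β)
  rw [hq] at hβγ
  exact hq₀.2 ((mul_lt_mul_iff_right₀ hpos).1 hxβ) ((mul_lt_mul_iff_right₀ hpos).1 hβγ)

noncomputable def treeParent (α β : Ordinal) : Ordinal :=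
  min α (β + ω ^ (multiplicity ω β + 1))

theorem treeParent_le : treeParent α β ≤ α := min_le_left _ _

theorem treeParent_self : treeParent α α = α := min_eq_left le_self_add

theorem lt_treeParent (h : β < α) : β < treeParent α β :=
  lt_min h (lt_add_of_pos_right β (pow_pos omega0_pos _))

theorem treeParent_eq_add (hne : treeParent α β ≠ α) :
    treeParent α β = β + ω ^ (multiplicity ω β + 1) :=
  (min_choice _ _).resolve_left hne

theorem treeParent_ne_zero (hne : treeParent α β ≠ α) : treeParent α β ≠ 0 := by
  rw [treeParent_eq_add hne]
  exact ((pow_pos omega0_pos _).trans_le le_add_self).ne'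

theorem multiplicity_lt_treeParent (hα : α < ω ^ ω) (hne : treeParent α β ≠ α) :
    multiplicity ω β < multiplicity ω (treeParent α β) := by
  have hfin := finiteMultiplicity_omega0 (treeParent_ne_zero hne) (treeParent_le.trans_lt hα)
  refine Nat.lt_of_succ_le (hfin.le_multiplicity_of_pow_dvd ?_)
  rw [treeParent_eq_add hne]
  exact omega0_pow_dvd_add _ _

theorem treeParent_iterate_eq {n : ℕ} (hn : α < ω ^ (n + 1)) :
    (treeParent α)^[n + 1] β = α := by
  have hα : α < ω ^ ω := hn.trans (omega0_pow_lt_omega0_opow_omega0 _)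
  have hrise : ∀ k, (treeParent α)^[k] β ≠ α → k ≤ multiplicity ω ((treeParent α)^[k] β) := by
    intro k
    induction k with
    | zero => exact fun _ => Nat.zero_le _
    | succ k ih =>
      intro hne
      rw [Function.iterate_succ_apply'] at hne ⊢
      have hne' : (treeParent α)^[k] β ≠ α := fun h => hne (by rw [h, treeParent_self])
      exact (ih hne').trans_lt (multiplicity_lt_treeParent hα hne)
  by_contra hne
  have hd := (pow_dvd_pow ω (hrise _ hne)).trans (pow_multiplicity_dvd ω _)
  rw [Function.iterate_succ_apply'] at hne hd
  exact (le_of_dvd (treeParent_ne_zero hne) hd).not_gt (treeParent_le.trans_lt hn)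

theorem exists_lt_forall_treeParent_le (hγ0 : γ ≠ 0) (hγ : γ < ω ^ ω) :
    ∃ x < γ, ∀ β ∈ Ioo x γ, treeParent α β ≤ γ := by
  obtain ⟨x, hx, hmult⟩ := exists_lt_forall_multiplicity_lt hγ0 hγ
  exact ⟨x, hx, fun β hβ => (min_le_right _ _).trans <| add_omega0_pow_le hβ.2 <|
    (pow_dvd_pow ω (hmult β hβ)).trans (pow_multiplicity_dvd ω γ)⟩

theorem eventually_treeParent_iterate_eq {n : ℕ} (hn : α < ω ^ (n + 1)) (hγ : γ ≤ α)
    {V : Set Ordinal} (hV : V ∈ 𝓝 γ) :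
    ∀ᶠ β in 𝓝 γ, ∃ j, (treeParent α)^[j] β = γ ∧ ∀ i ≤ j, (treeParent α)^[i] β ∈ V := by
  by_cases hlim : IsSuccLimit γ
  · have hbasis := SuccOrder.hasBasis_nhds_Ioc_of_exists_lt ⟨0, hlim.bot_lt⟩
    obtain ⟨x₀, hx₀, hle⟩ := exists_lt_forall_treeParent_le (α := α) hlim.bot_lt.ne'
      (hγ.trans_lt (hn.trans (omega0_pow_lt_omega0_opow_omega0 _)))
    obtain ⟨x₁, hx₁, hsub⟩ := hbasis.mem_iff.1 hV
    filter_upwards [hbasis.mem_of_mem (max_lt hx₀ hx₁)] with β hβ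
    have hmaps : MapsTo (treeParent α) (Ioc (max x₀ x₁) γ \ {γ}) (Ioc (max x₀ x₁) γ) := by
      rintro z ⟨⟨hxz, hzγ⟩, hzne⟩
      have hzγ' : z < γ := lt_of_le_of_ne hzγ hzne
      exact ⟨hxz.trans (lt_treeParent (hzγ'.trans_le hγ)),
        hle z ⟨(le_max_left _ _).trans_lt hxz, hzγ'⟩⟩
    obtain ⟨j, hj, hmem⟩ := Function.exists_iterate_eq_of_mapsTo_diff hmaps hβ
      ⟨n + 1, by rw [treeParent_iterate_eq hn]; exact fun h => h.2 (le_antisymm h.1.2 hγ)⟩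
    exact ⟨j, hj, fun i hi => hsub (Ioc_subset_Ioc_left (le_max_right _ _) (hmem i hi))⟩
  · rw [SuccOrder.nhds_eq_pure.2 hlim, eventually_pure]
    exact ⟨0, rfl, fun i hi => by rw [Nat.le_zero.1 hi]; exact mem_of_mem_nhds hV⟩

theorem countable_Iic (hα : α < ω ^ ω) : (Iic α).Countable :=
  (Cardinal.le_aleph0_iff_set_countable.1 (by
    rw [Cardinal.mk_Iio_ordinal, card_omega0_opow omega0_ne_zero, card_omega0, max_self,
      Cardinal.lift_aleph0])).mono (Iic_subset_Iio.2 hα)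

theorem infinite_Iic (hα : ω ≤ α) : (Iic α).Infinite :=
  Set.infinite_of_injective_forall_mem Nat.cast_injective fun n : ℕ =>
    (natCast_lt_omega0 n).le.trans hα

theorem mapsTo_treeParent : MapsTo (treeParent α) (Iic α) (Iic α) :=
  fun _ _ => treeParent_le

theorem coe_treeParent_iterate (k : ℕ) (y : Iic α) :
    ((mapsTo_treeParent.restrict _ _ _)^[k] y : Ordinal) = (treeParent α)^[k] y := by
  rw [MapsTo.iterate_restrict, MapsTo.val_restrict_apply]

noncomputable def compatibleTree {n : ℕ} (hn : α < ω ^ (n + 1)) : CompatibleTree (Iic α) where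
  parent := mapsTo_treeParent.restrict _ _ _
  root := ⟨α, self_mem_Iic⟩
  height := n + 1
  parent_iterate_height y := Subtype.ext <| by
    rw [coe_treeParent_iterate, treeParent_iterate_eq hn]
  eventually_iterate_eq x V hV := by
    obtain ⟨V', hV', hsub⟩ := (mem_nhds_subtype _ x V).1 hV
    filter_upwards [(continuous_subtype_val.tendsto x).eventually
      (eventually_treeParent_iterate_eq hn x.2 hV')] with y ⟨j, hj, hmem⟩
    exact ⟨j, Subtype.ext (by rw [coe_treeParent_iterate, hj]), fun i hi =>
      hsub (by rw [Set.mem_preimage, coe_treeParent_iterate]; exact hmem i hi)⟩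

end Ordinal

/-- For every infinite ordinal `α < ω^ω`, the space `C(α)` of continuous real
functions on `[0, α]` (with the order topology; equivalently, bounded continuous
functions on the compact space `Iic α`) is linearly homeomorphic to `c₀`. -/
theorem stmt14 (α : Ordinal) (hα : Ordinal.omega0 ≤ α)
    (hα' : α < Ordinal.omega0 ^ Ordinal.omega0) :
    Nonempty ((BoundedContinuousFunction (Set.Iic α) ℝ) ≃L[ℝ] C₀(ℕ, ℝ)) := by
  obtain ⟨n, hn⟩ := Ordinal.exists_lt_omega0_pow_succ hα'
  have : CompactSpace (Iic α) :=
    isCompact_iff_compactSpace.1 (by rw [← Set.Icc_bot]; exact isCompact_Icc)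
  have : Countable (Iic α) := (Ordinal.countable_Iic hα').to_subtype
  have : Infinite (Iic α) := (Ordinal.infinite_Iic hα).to_subtype
  obtain ⟨_⟩ := nonempty_denumerable (Iic α)
  exact ⟨(Ordinal.compatibleTree hn).incrementEquiv (Denumerable.eqv (Iic α)).symm⟩
end

section
/- For each n ∈ ℕ, let K_n be the set of sequences (b_i) ∈ ℝ^ℕ with (|b_i|) = t_n·∑_{i∈A} e_i for some A ⊆ ℕ with |A| ≤ n, where t_n > 0. Then the convex hull conv(K_n) is solid: if x ∈ conv(K_n) and |y_i| ≤ |x_i| for all i, then y ∈ conv(K_n). -/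
/-- The convex hull of `Kₙ = {b : (|bᵢ|) = tₙ·∑_{i∈A} eᵢ, |A| ≤ n}` is solid:
`x ∈ conv(Kₙ)` and `|yᵢ| ≤ |xᵢ|` for all `i` imply `y ∈ conv(Kₙ)`. -/
theorem stmt19 (tn : ℝ) (htn : 0 < tn) (n : ℕ)
    (x y : ℕ → ℝ)
    (hx : x ∈ convexHull ℝ {b : ℕ → ℝ | ∃ A : Finset ℕ, A.card ≤ n ∧
        ∀ i, |b i| = if i ∈ A then tn else 0})
    (hy : ∀ i, |y i| ≤ |x i|) :
    y ∈ convexHull ℝ {b : ℕ → ℝ | ∃ A : Finset ℕ, A.card ≤ n ∧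
        ∀ i, |b i| = if i ∈ A then tn else 0} := by
  set K : Set (ℕ → ℝ) := {b : ℕ → ℝ | ∃ A : Finset ℕ, A.card ≤ n ∧
      ∀ i, |b i| = if i ∈ A then tn else 0} with hKdef
  -- K (hence conv K) is closed under coordinatewise sign flips
  have flip : ∀ (ε : ℕ → ℝ), (∀ i, |ε i| = 1) → ∀ z ∈ convexHull ℝ K,
      (fun i => ε i * z i) ∈ convexHull ℝ K := by
    intro ε hε z hz
    let L : (ℕ → ℝ) →ₗ[ℝ] (ℕ → ℝ) :=
      { toFun := fun b i => ε i * b i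
        map_add' := by intro a b; funext i; simp [mul_add]
        map_smul' := by intro c b; funext i; simp [smul_eq_mul]; ring }
    have hsub : convexHull ℝ K ⊆ L ⁻¹' (convexHull ℝ K) := by
      apply convexHull_min
      · rintro b ⟨A, hA, hb⟩
        exact subset_convexHull ℝ K ⟨A, hA, fun i => by
          simp only [L, LinearMap.coe_mk, AddHom.coe_mk, abs_mul, hε i, one_mul, hb i]⟩
      · exact (convex_convexHull ℝ K).linear_preimage L
    exact hsub hz
  -- x has finite support
  obtain ⟨S, hS⟩ : ∃ S : Finset ℕ, ∀ i ∉ S, x i = 0 := by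
    have hsub : convexHull ℝ K ⊆ {f : ℕ → ℝ | ∃ S : Finset ℕ, ∀ i ∉ S, f i = 0} := by
      apply convexHull_min
      · rintro b ⟨A, _, hb⟩
        exact ⟨A, fun i hi => abs_eq_zero.mp (by simp [hb i, hi])⟩
      · rintro f ⟨Sf, hf⟩ g ⟨Sg, hg⟩ a b _ _ _
        refine ⟨Sf ∪ Sg, fun i hi => ?_⟩
        have h1 : f i = 0 := hf i fun h => hi (Finset.mem_union_left _ h)
        have h2 : g i = 0 := hg i fun h => hi (Finset.mem_union_right _ h)
        simp [h1, h2]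
    exact hsub hx
  -- the ratio θ
  set θ : ℕ → ℝ := fun i => if x i = 0 then 0 else y i / x i with hθdef
  have hθ1 : ∀ i, |θ i| ≤ 1 := by
    intro i
    simp only [hθdef]
    split_ifs with h
    · simp
    · rw [abs_div, div_le_one (abs_pos.mpr h)]
      exact hy i
  have hθ2 : ∀ i, y i = θ i * x i := by
    intro i
    simp only [hθdef]
    split_ifs with h
    · have := hy i
      rw [h, abs_zero] at this
      have : |y i| = 0 := le_antisymm this (abs_nonneg _)
      simp [abs_eq_zero.mp this]
    · field_simp
  have hθm : ∀ i, 0 ≤ (1 - θ i) / 2 ∧ 0 ≤ (1 + θ i) / 2 := by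
    intro i
    obtain ⟨h1, h2⟩ := abs_le.mp (hθ1 i)
    constructor <;> linarith
  -- weights
  set w : Finset ℕ → ℝ :=
    fun T => (∏ i ∈ T, (1 - θ i) / 2) * ∏ i ∈ S \ T, (1 + θ i) / 2 with hwdef
  have hw0 : ∀ T ∈ S.powerset, 0 ≤ w T := fun T _ =>
    mul_nonneg (Finset.prod_nonneg fun i _ => (hθm i).1)
      (Finset.prod_nonneg fun i _ => (hθm i).2)
  have hw1 : ∑ T ∈ S.powerset, w T = 1 := by
    rw [hwdef, ← Finset.prod_add]
    rw [Finset.prod_eq_one]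
    intro i _
    ring
  -- key coordinate identity
  have key : ∀ j, ∑ T ∈ S.powerset, w T * (if j ∈ T then (-1 : ℝ) else 1)
      = if j ∈ S then θ j else 1 := by
    intro j
    have h := Finset.prod_add
      (fun i => (if i = j then (-1 : ℝ) else 1) * ((1 - θ i) / 2))
      (fun i => (1 + θ i) / 2) S
    have hL : ∏ i ∈ S, ((if i = j then (-1 : ℝ) else 1) * ((1 - θ i) / 2) + (1 + θ i) / 2)
        = if j ∈ S then θ j else 1 := by
      rw [← Finset.prod_ite_eq' S j (fun i => θ i)]
      apply Finset.prod_congr rfl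
      intro i _
      split_ifs <;> ring
    rw [hL] at h
    rw [h]
    apply Finset.sum_congr rfl
    intro T hT
    rw [Finset.prod_mul_distrib, Finset.prod_ite_eq' T j (fun _ => (-1 : ℝ))]
    rw [hwdef]
    ring
  -- y as a convex combination of sign flips of x
  have hy' : y = ∑ T ∈ S.powerset,
      w T • (fun i => (if i ∈ T then (-1 : ℝ) else 1) * x i) := by
    funext j
    rw [Finset.sum_apply]
    simp only [Pi.smul_apply, smul_eq_mul]
    have : ∑ T ∈ S.powerset, w T * ((if j ∈ T then (-1 : ℝ) else 1) * x j)
        = (∑ T ∈ S.powerset, w T * (if j ∈ T then (-1 : ℝ) else 1)) * x j := by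
      rw [Finset.sum_mul]
      apply Finset.sum_congr rfl
      intro T _
      ring
    rw [this, key j]
    by_cases hj : j ∈ S
    · rw [if_pos hj, ← hθ2 j]
    · rw [if_neg hj, one_mul, hS j hj, hθ2 j, hS j hj, mul_zero]
  rw [hy']
  exact (convex_convexHull ℝ K).sum_mem hw0 hw1 (fun T _ =>
    flip _ (fun i => by split_ifs <;> simp) x hx)
end
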